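/- arXiv:2509.20773 — 3 statements merged into one kernel-verified Lean document; each statement's English description precedes it below -/
import Mathlib

section
/- Let m and k be integers with m ≥ 2, 1 ≤ k, and 2k ≤ m. Then the number of binary words of length m whose shortest abelian border has length exactly k equals (1/k)·C(2k−2, k−1)·2^{m−2k+1} (equivalently, Catalan(k−1)·2^{m−2k+1}). -/
open List DyckStep

private def stps : List Bool → List Bool → List DyckStep
  | x :: xs, y :: ys =>
      (if x then U else D) :: (if y then D else U) :: stps xs ys
  | _, _ => []

private lemma stps_length : ∀ (x y : List Bool), x.length = y.length →
    (stps x y).length = 2 * x.length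
  | [], [], _ => rfl
  | x :: xs, y :: ys, h => by
      simp only [stps, length_cons]
      rw [stps_length xs ys (by simpa using h)]; ring
  | [], _ :: _, h => by simp at h
  | _ :: _, [], h => by simp at h

private lemma stps_countU_take : ∀ (x y : List Bool), x.length = y.length → ∀ (t : ℕ),
    ((stps x y).take (2 * t)).count U
      = (x.take t).count true + (y.take t).count false
  | [], [], _, t => by cases t <;> simp [stps]
  | [], _ :: _, h, t => by simp at h
  | _ :: _, [], h, t => by simp at h
  | x :: xs, y :: ys, h, 0 => by simp
  | x :: xs, y :: ys, h, (t + 1) => by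
      have e : 2 * (t + 1) = (2 * t) + 1 + 1 := by ring
      rw [e]
      simp only [stps, take_succ_cons, count_cons]
      rw [stps_countU_take xs ys (by simpa using h) t]
      cases x <;> cases y <;> simp <;> omega

private lemma stps_countD_take : ∀ (x y : List Bool), x.length = y.length → ∀ (t : ℕ),
    ((stps x y).take (2 * t)).count D
      = (x.take t).count false + (y.take t).count true
  | [], [], _, t => by cases t <;> simp [stps]
  | [], _ :: _, h, t => by simp at h
  | _ :: _, [], h, t => by simp at h
  | x :: xs, y :: ys, h, 0 => by simp
  | x :: xs, y :: ys, h, (t + 1) => by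
      have e : 2 * (t + 1) = (2 * t) + 1 + 1 := by ring
      rw [e]
      simp only [stps, take_succ_cons, count_cons]
      rw [stps_countD_take xs ys (by simpa using h) t]
      cases x <;> cases y <;> simp <;> omega

private def unstps : List DyckStep → List Bool × List Bool
  | u :: d :: rest => ((u = U) :: (unstps rest).1, (d = D) :: (unstps rest).2)
  | _ => ([], [])

private lemma unstps_stps : ∀ (x y : List Bool), x.length = y.length →
    unstps (stps x y) = (x, y)
  | [], [], _ => rfl
  | [], _ :: _, h => by simp at h
  | _ :: _, [], h => by simp at h
  | x :: xs, y :: ys, h => by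
      simp only [stps, unstps, unstps_stps xs ys (by simpa using h)]
      cases x <;> cases y <;> simp

private lemma stps_unstps : ∀ (s : List DyckStep), 2 ∣ s.length →
    stps (unstps s).1 (unstps s).2 = s
  | [], _ => rfl
  | [_], h => by simp at h
  | u :: d :: rest, h => by
      have : 2 ∣ rest.length := by simp only [length_cons] at h; omega
      simp only [unstps, stps, stps_unstps rest this]
      cases u <;> cases d <;> simp

private lemma unstps_length : ∀ (s : List DyckStep), 2 ∣ s.length →
    (unstps s).1.length = s.length / 2 ∧ (unstps s).2.length = s.length / 2
  | [], _ => by simp [unstps]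
  | [_], h => by simp at h
  | u :: d :: rest, h => by
      have h2 : 2 ∣ rest.length := by simp only [length_cons] at h; omega
      obtain ⟨h3, h4⟩ := unstps_length rest h2
      simp only [unstps, length_cons, h3, h4]
      omega

private lemma count_tf (l : List Bool) : l.count true + l.count false = l.length := by
  induction l with
  | nil => simp
  | cons a l ih => cases a <;> simp [count_cons] <;> omega

private lemma count_UD (s : List DyckStep) : s.count U + s.count D = s.length := by
  induction s with
  | nil => simp
  | cons a s ih => cases a <;> simp [count_cons] <;> omega

/-- first-return path predicate -/
private def FR (s : List DyckStep) : Prop :=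
  s.count U = s.count D ∧
    ∀ n, 1 ≤ n → n < s.length → (s.take n).count U ≠ (s.take n).count D

private lemma FR_iff (x y : List Bool) (k : ℕ) (hx : x.length = k) (hy : y.length = k) :
    FR (stps x y) ↔ (x.count true = y.count true ∧
      ∀ t, 1 ≤ t → t < k → (x.take t).count true ≠ (y.take t).count true) := by
  have hxy : x.length = y.length := by omega
  have hlen : (stps x y).length = 2 * k := by rw [stps_length x y hxy, hx]
  have key : ∀ t, t ≤ k →
      (((stps x y).take (2 * t)).count U = ((stps x y).take (2 * t)).count D ↔
        (x.take t).count true = (y.take t).count true) := by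
    intro t ht
    rw [stps_countU_take x y hxy t, stps_countD_take x y hxy t]
    have h1 := count_tf (x.take t)
    have h2 := count_tf (y.take t)
    rw [length_take, hx, min_eq_left ht] at h1
    rw [length_take, hy, min_eq_left ht] at h2
    omega
  constructor
  · rintro ⟨h0, h1⟩
    constructor
    · have := (key k le_rfl)
      rw [take_of_length_le (by omega), take_of_length_le (by omega),
        take_of_length_le (by omega)] at this
      exact this.mp h0
    · intro t h1t htk heq
      exact h1 (2 * t) (by omega) (by omega) ((key t (by omega)).mpr heq)
  · rintro ⟨h0, h1⟩
    constructor
    · have := (key k le_rfl)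
      rw [take_of_length_le (by omega), take_of_length_le (by omega),
        take_of_length_le (by omega)] at this
      exact this.mpr h0
    · intro n hn1 hnl heq
      rcases Nat.even_or_odd n with ⟨t, ht⟩ | ⟨t, ht⟩
      · subst ht
        have ht : t ≤ k := by omega
        have := (key t ht).mp (by rw [two_mul]; convert heq using 3 <;> omega)
        exact h1 t (by omega) (by omega) this
      · -- odd prefix: counts cannot be equal since length is odd
        have hlt : n ≤ (stps x y).length := by omega
        have := count_UD ((stps x y).take n)
        rw [length_take, min_eq_left hlt] at this
        omega

private def flipS : DyckStep → DyckStep | U => D | D => U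

private lemma flipS_flipS (s : DyckStep) : flipS (flipS s) = s := by cases s <;> rfl

private lemma count_map_flipS_U (l : List DyckStep) :
    (l.map flipS).count U = l.count D := by
  simp only [count_eq_countP, countP_map]
  exact countP_congr (fun a _ => by cases a <;> simp [flipS])

private lemma count_map_flipS_D (l : List DyckStep) :
    (l.map flipS).count D = l.count U := by
  simp only [count_eq_countP, countP_map]
  exact countP_congr (fun a _ => by cases a <;> simp [flipS])

private lemma FR_map_flipS {s : List DyckStep} (h : FR s) : FR (s.map flipS) := by
  obtain ⟨h0, h1⟩ := h
  refine ⟨by rw [count_map_flipS_U, count_map_flipS_D, h0], fun n hn1 hn2 hc => ?_⟩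
  rw [← map_take, count_map_flipS_U, count_map_flipS_D] at hc
  exact h1 n hn1 (by simpa using hn2) hc.symm

/-- step list encoded by a sign and a Dyck word -/
private def frW (b : Bool) (p : DyckWord) : List DyckStep :=
  if b then U :: p.toList ++ [D] else (U :: p.toList ++ [D]).map flipS

private lemma frW_length (b : Bool) (p : DyckWord) :
    (frW b p).length = p.toList.length + 2 := by
  cases b <;> simp [frW]

private lemma FR_pos (p : DyckWord) : FR (U :: p.toList ++ [D]) := by
  constructor
  · simp [count_cons, count_append, p.count_U_eq_count_D]
  · intro n hn1 hn2 hc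
    have hl : (U :: p.toList ++ [D]).length = p.toList.length + 2 := by simp
    rw [hl] at hn2
    obtain ⟨i, rfl⟩ : ∃ i, n = i + 1 := ⟨n - 1, by omega⟩
    have hi : i ≤ p.toList.length := by omega
    have htake : (U :: p.toList ++ [D]).take (i + 1) = U :: p.toList.take i := by
      rw [cons_append, take_succ_cons, take_append_of_le_length hi]
    rw [htake] at hc
    have := p.count_D_le_count_U i
    simp [count_cons] at hc
    omega

private lemma FR_frW (b : Bool) (p : DyckWord) : FR (frW b p) := by
  cases b
  · exact FR_map_flipS (FR_pos p)
  · exact FR_pos p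

private lemma FR_decomp {s : List DyckStep} {k : ℕ} (hk : 1 ≤ k)
    (hlen : s.length = 2 * k) (hfr : FR s) :
    ∃ b p, s = frW b p ∧ (p : DyckWord).toList.length = 2 * (k - 1) := by
  -- first handle the case where the head is U
  obtain ⟨h0, h1⟩ := hfr
  have hne : s ≠ [] := by intro h; rw [h] at hlen; simp at hlen; omega
  suffices H : ∀ s : List DyckStep, s.length = 2 * k →
      s.count U = s.count D →
      (∀ n, 1 ≤ n → n < s.length → (s.take n).count U ≠ (s.take n).count D) →
      s.head? = some U →
      ∃ p : DyckWord, s = U :: p.toList ++ [D] ∧ p.toList.length = 2 * (k - 1) by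
    rcases (s.head hne).dichotomy with hU | hD
    · obtain ⟨p, hp, hpl⟩ := H s hlen h0 h1 (by rw [List.head?_eq_head hne, hU])
      exact ⟨true, p, by simpa [frW] using hp, hpl⟩
    · -- flip
      have hfr' := FR_map_flipS ⟨h0, h1⟩
      obtain ⟨hf0, hf1⟩ := hfr'
      have hml : (s.map flipS).length = 2 * k := by simpa using hlen
      have hmh : (s.map flipS).head? = some U := by
        rw [head?_map, List.head?_eq_head hne, hD]
        rfl
      obtain ⟨p, hp, hpl⟩ := H (s.map flipS) hml hf0 hf1 hmh
      refine ⟨false, p, ?_, hpl⟩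
      have : s = (s.map flipS).map flipS := by
        rw [map_map]
        have he : flipS ∘ flipS = id := funext flipS_flipS
        rw [he, map_id]
      rw [this, hp, frW]
      simp
  clear h0 h1 hne hlen
  intro s hlen h0 h1 hh
  have hne : s ≠ [] := by intro h; rw [h] at hlen; simp at hlen; omega
  -- positivity of all proper prefixes
  have pos : ∀ n, 1 ≤ n → n < s.length →
      (s.take n).count D < (s.take n).count U := by
    intro n
    induction n with
    | zero => omega
    | succ n ih =>
      intro _ hns
      rcases Nat.eq_or_lt_of_le (Nat.one_le_iff_ne_zero.mpr (Nat.succ_ne_zero n)) with h | h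
      · -- n + 1 = 1
        obtain rfl : n = 0 := by omega
        have : s.take 1 = [U] := by
          cases s with
          | nil => simp at hne
          | cons a t => simp only [head?_cons, Option.some_inj] at hh; rw [hh]; rfl
        simp [this]
      · have hn1 : 1 ≤ n := by omega
        have hns' : n < s.length := by omega
        have hih := ih hn1 hns'
        have hmU : (s.take n).count U ≤ (s.take (n+1)).count U :=
          ((take_prefix_take_left (l := s) (by omega : n ≤ n + 1)).sublist).count_le U
        have hmD : (s.take n).count D ≤ (s.take (n+1)).count D :=
          ((take_prefix_take_left (l := s) (by omega : n ≤ n + 1)).sublist).count_le D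
        have hs1 := count_UD (s.take n)
        have hs2 := count_UD (s.take (n+1))
        rw [length_take, min_eq_left (by omega)] at hs1
        rw [length_take, min_eq_left (by omega)] at hs2
        have hne' := h1 (n+1) (by omega) hns
        omega
  -- the last element is D
  have hlast : s.getLast hne = D := by
    by_contra hf
    have hlU : s.getLast hne = U := (dichotomy _).resolve_right hf
    have hsplit : s.dropLast ++ [U] = s := by
      rw [← hlU]; exact dropLast_append_getLast hne
    have hdl : s.dropLast = s.take (s.length - 1) := dropLast_eq_take (l := s)
    have hp := pos (s.length - 1) (by omega) (by omega)
    rw [← hdl] at hp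
    have : s.count U = s.dropLast.count U + 1 ∧ s.count D = s.dropLast.count D := by
      constructor <;> (rw [← hsplit]; simp [count_append])
    omega
  -- build the Dyck word from the middle part
  have hsplit : s.dropLast ++ [D] = s := by rw [← hlast]; exact dropLast_append_getLast hne
  have hh' : ∃ t, s.dropLast = U :: t := by
    cases s with
    | nil => simp at hne
    | cons a t =>
      simp only [head?_cons, Option.some_inj] at hh
      subst hh
      cases t with
      | nil => simp at hlen; omega
      | cons b u => exact ⟨(b :: u).dropLast, by simp⟩
  obtain ⟨body, hbody⟩ := hh'
  have hsb : s = U :: body ++ [D] := by rw [← hsplit, hbody]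
  have hbl : body.length = 2 * (k - 1) := by
    have := congrArg List.length hsb
    simp at this
    omega
  have hcb : s.count U = body.count U + 1 ∧ s.count D = body.count D + 1 := by
    rw [hsb]; constructor <;> simp [count_cons, count_append]
  have hDyck : ∀ i, (body.take i).count D ≤ (body.take i).count U := by
    intro i
    rcases le_or_gt body.length i with hi | hi
    · rw [take_of_length_le hi]
      omega
    · have hp := pos (i + 1) (by omega) (by rw [hsb]; simp; omega)
      have : s.take (i + 1) = U :: body.take i := by
        rw [hsb, cons_append, take_succ_cons, take_append_of_le_length (by omega)]
      rw [this] at hp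
      simp [count_cons] at hp
      omega
  refine ⟨⟨body, by omega, hDyck⟩, by simpa using hsb, hbl⟩

private lemma map_flipS_inj : Function.Injective (List.map flipS) := by
  intro a b h
  have : ∀ l : List DyckStep, (l.map flipS).map flipS = l := by
    intro l
    rw [map_map]
    have he : flipS ∘ flipS = id := funext flipS_flipS
    rw [he, map_id]
  rw [← this a, ← this b, h]

private lemma frW_inj {b b' : Bool} {p p' : DyckWord} (h : frW b p = frW b' p') :
    b = b' ∧ p = p' := by
  have hb : b = b' := by
    by_contra hbb
    have h1 : ∀ (q : DyckWord), (frW true q).head? = some U := fun q => by simp [frW]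
    have h2 : ∀ (q : DyckWord), (frW false q).head? = some D := fun q => by
      simp [frW, flipS]
    cases b <;> cases b' <;> simp_all
    · have e1 : (frW false p).head? = some D := h2 p
      rw [h, h1 p'] at e1; simp at e1
    · have e1 : (frW true p).head? = some U := h1 p
      rw [h, h2 p'] at e1; simp at e1
  subst hb
  refine ⟨rfl, ?_⟩
  have hl : U :: p.toList ++ [D] = U :: p'.toList ++ [D] := by
    cases b
    · exact map_flipS_inj (by simpa [frW] using h)
    · simpa [frW] using h
  ext1
  simpa using hl

private def TSet (k : ℕ) : Set (List Bool × List Bool) :=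
  {xy | xy.1.length = k ∧ xy.2.length = k ∧ xy.1.count true = xy.2.count true ∧
    ∀ t, 1 ≤ t → t < k → (xy.1.take t).count true ≠ (xy.2.take t).count true}

private def gmap (k : ℕ) : Bool × {p : DyckWord // p.semilength = k - 1} →
    List Bool × List Bool :=
  fun bp => unstps (frW bp.1 bp.2.1)

private lemma frW_len2k {k : ℕ} (hk : 1 ≤ k) {p : DyckWord} (hp : p.semilength = k - 1) :
    (frW true p).length = 2 * k ∧ ∀ b, (frW b p).length = 2 * k := by
  have h2 := p.two_mul_semilength_eq_length
  rw [hp] at h2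
  have : ∀ b, (frW b p).length = 2 * k := by
    intro b; rw [frW_length]; omega
  exact ⟨this true, this⟩

private lemma gmap_range {k : ℕ} (hk : 1 ≤ k) : Set.range (gmap k) = TSet k := by
  ext ⟨x, y⟩
  constructor
  · rintro ⟨⟨b, p, hp⟩, hg⟩
    have hlen : (frW b p).length = 2 * k := ((frW_len2k hk hp).2 b)
    have hdvd : 2 ∣ (frW b p).length := ⟨k, hlen⟩
    have hunl := unstps_length _ hdvd
    simp only [gmap, Prod.mk.injEq] at hg
    obtain ⟨hgx, hgy⟩ : (unstps (frW b p)).1 = x ∧ (unstps (frW b p)).2 = y := by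
      rw [Prod.ext_iff] at hg; exact hg
    have hx : x.length = k := by rw [← hgx]; omega
    have hy : y.length = k := by rw [← hgy]; omega
    have hst : stps x y = frW b p := by rw [← hgx, ← hgy]; exact stps_unstps _ hdvd
    have hfr : FR (stps x y) := hst ▸ FR_frW b p
    obtain ⟨hc, hcc⟩ := (FR_iff x y k hx hy).mp hfr
    exact ⟨hx, hy, hc, hcc⟩
  · rintro ⟨hx', hy', hc', hcc'⟩
    have hx : x.length = k := hx'
    have hy : y.length = k := hy'
    have hc : x.count true = y.count true := hc'
    have hcc : ∀ t, 1 ≤ t → t < k → (x.take t).count true ≠ (y.take t).count true := hcc'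
    have hfr : FR (stps x y) := (FR_iff x y k hx hy).mpr ⟨hc, hcc⟩
    have hlen : (stps x y).length = 2 * k := by
      rw [stps_length x y (by omega), hx]
    obtain ⟨b, p, hs, hpl⟩ := FR_decomp hk hlen hfr
    have hps : p.semilength = k - 1 := by
      have := p.two_mul_semilength_eq_length
      omega
    refine ⟨⟨b, p, hps⟩, ?_⟩
    simp only [gmap, ← hs]
    exact unstps_stps x y (by omega)

private lemma gmap_inj {k : ℕ} (hk : 1 ≤ k) : Function.Injective (gmap k) := by
  rintro ⟨b, p, hp⟩ ⟨b', p', hp'⟩ h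
  simp only [gmap] at h
  have h1 : 2 ∣ (frW b p).length := ⟨k, (frW_len2k hk hp).2 b⟩
  have h2 : 2 ∣ (frW b' p').length := ⟨k, (frW_len2k hk hp').2 b'⟩
  have : frW b p = frW b' p' := by
    rw [← stps_unstps _ h1, ← stps_unstps _ h2, h]
  obtain ⟨hb, hpp⟩ := frW_inj this
  subst hb
  simp [hpp]

private lemma TSet_ncard {k : ℕ} (hk : 1 ≤ k) :
    (TSet k).ncard = 2 * catalan (k - 1) := by
  rw [← gmap_range hk, ← Nat.card_coe_set_eq,
    Nat.card_range_of_injective (gmap_inj hk), Nat.card_prod,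
    Nat.card_eq_fintype_card, Nat.card_eq_fintype_card,
    DyckWord.card_dyckWord_semilength_eq_catalan]
  simp

/-- Abelian equivalence of binary words; the alphabet `{a, b}` is encoded by
`Bool` with `a = true` and `b = false`. -/
def AbEq (x y : List Bool) : Prop :=
  x.count true = y.count true ∧ x.count false = y.count false

/-- The binary word `w` has shortest abelian border of length exactly `k`:
`1 ≤ k ≤ |w| - 1`, the prefix and the suffix of `w` of length `k` are abelian
equivalent, and no shorter length has this property. -/
def ShortestAbBorder (w : List Bool) (k : ℕ) : Prop :=
  1 ≤ k ∧ k ≤ w.length - 1 ∧ AbEq (w.take k) (w.drop (w.length - k)) ∧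
    ∀ t, 1 ≤ t → t < k → ¬ AbEq (w.take t) (w.drop (w.length - t))

private lemma AbEq_iff {a b : List Bool} (h : a.length = b.length) :
    AbEq a b ↔ a.count true = b.count true := by
  have h1 := count_tf a
  have h2 := count_tf b
  constructor
  · exact fun hab => hab.1
  · intro hc
    exact ⟨hc, by omega⟩

section Outer

variable {m k : ℕ} (hk : 1 ≤ k) (hkm : 2 * k ≤ m)
variable {x y v : List Bool} (hx : x.length = k) (hy : y.length = k)
  (hv : v.length = m - 2 * k)

include hkm hx hy hv in
private lemma outer_len : (x ++ v ++ y.reverse).length = m := by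
  simp [hx, hy, hv]; omega

include hk hkm hx hy hv in
private lemma outer_take {t : ℕ} (ht : t ≤ k) :
    (x ++ v ++ y.reverse).take t = x.take t := by
  rw [append_assoc, take_append_of_le_length (by omega)]

include hk hkm hx hy hv in
private lemma outer_drop {t : ℕ} (ht : t ≤ k) :
    (x ++ v ++ y.reverse).drop (m - t) = (y.take t).reverse := by
  have hxv : (x ++ v).length = m - k := by simp [hx, hv]; omega
  rw [drop_append, drop_of_length_le (by omega), nil_append, hxv]
  rw [List.drop_reverse]
  congr 1
  · congr 1
    omega

include hk hkm hx hy hv in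
private lemma outer_iff :
    ShortestAbBorder (x ++ v ++ y.reverse) k ↔ (x, y) ∈ TSet k := by
  set w := x ++ v ++ y.reverse with hw
  have hwl : w.length = m := outer_len hkm hx hy hv
  have habt : ∀ t, t ≤ k → (AbEq (w.take t) (w.drop (w.length - t)) ↔
      (x.take t).count true = (y.take t).count true) := by
    intro t ht
    rw [hwl, outer_take hk hkm hx hy hv ht, outer_drop hk hkm hx hy hv ht]
    rw [AbEq_iff (by simp [length_take]; omega)]
    rw [count_reverse]
  constructor
  · rintro ⟨-, -, hb, hs⟩
    refine ⟨hx, hy, ?_, fun t ht1 htk hc => ?_⟩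
    · have := (habt k le_rfl).mp hb
      rwa [take_of_length_le (by omega), take_of_length_le (by omega)] at this
    · exact hs t ht1 htk ((habt t (by omega)).mpr hc)
  · rintro ⟨-, -, hc, hcc⟩
    refine ⟨hk, by omega, ?_, fun t ht1 htk hab => ?_⟩
    · rw [habt k le_rfl, take_of_length_le (by omega), take_of_length_le (by omega)]
      exact hc
    · exact hcc t ht1 htk ((habt t (by omega)).mp hab)

end Outer

theorem stmt_0 (m k : ℕ) (hm : 2 ≤ m) (hk : 1 ≤ k) (hkm : 2 * k ≤ m) :
    {w : List Bool | w.length = m ∧ ShortestAbBorder w k}.ncard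
      = catalan (k - 1) * 2 ^ (m - 2 * k + 1) := by
  classical
  set V : Set (List Bool) := {v | v.length = m - 2 * k} with hV
  set A : Set ((List Bool × List Bool) × List Bool) := (TSet k) ×ˢ V with hA
  set φ : (List Bool × List Bool) × List Bool → List Bool :=
    fun q => q.1.1 ++ q.2 ++ q.1.2.reverse with hφ
  have himg : φ '' A = {w | w.length = m ∧ ShortestAbBorder w k} := by
    ext w
    constructor
    · rintro ⟨⟨⟨x, y⟩, v⟩, ⟨hT, hvV⟩, rfl⟩
      have hx : x.length = k := hT.1
      have hy : y.length = k := hT.2.1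
      have hv : v.length = m - 2 * k := hvV
      exact ⟨outer_len hkm hx hy hv, (outer_iff hk hkm hx hy hv).mpr hT⟩
    · rintro ⟨hw, hsb⟩
      set x := w.take k with hxdef
      set v := (w.drop k).take (m - 2 * k) with hvdef
      set y := (w.drop (m - k)).reverse with hydef
      have hx : x.length = k := by simp [hxdef, hw]; omega
      have hy : y.length = k := by simp [hydef, hw]; omega
      have hv : v.length = m - 2 * k := by simp [hvdef, hw]; omega
      have hrec : w = x ++ v ++ y.reverse := by
        have h1 : y.reverse = w.drop (m - k) := by simp [hydef]
        rw [h1]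
        have h2 : v ++ w.drop (m - k) = w.drop k := by
          have h3 : (w.drop k).drop (m - 2 * k) = w.drop (m - k) := by
            rw [drop_drop]; congr 1; omega
          rw [← h3, hvdef]; exact take_append_drop _ _
        rw [append_assoc, h2, hxdef, take_append_drop]
      refine ⟨⟨⟨x, y⟩, v⟩, ⟨?_, hv⟩, hrec.symm⟩
      exact (outer_iff hk hkm hx hy hv).mp (hrec ▸ hsb)
  have hinj : Set.InjOn φ A := by
    rintro ⟨⟨x1, y1⟩, v1⟩ ⟨hT1, hv1⟩ ⟨⟨x2, y2⟩, v2⟩ ⟨hT2, hv2⟩ heq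
    have hx1 : x1.length = k := hT1.1
    have hy1 : y1.length = k := hT1.2.1
    have hx2 : x2.length = k := hT2.1
    have hy2 : y2.length = k := hT2.2.1
    have hvl1 : v1.length = m - 2 * k := hv1
    have hvl2 : v2.length = m - 2 * k := hv2
    have heq' : x1 ++ v1 ++ y1.reverse = x2 ++ v2 ++ y2.reverse := heq
    have hxe : x1 = x2 := by
      have e1 : (x1 ++ v1 ++ y1.reverse).take k = x1 := by
        rw [outer_take hk hkm hx1 hy1 hvl1 (le_refl k)]
        exact take_of_length_le (by omega)
      have e2 : (x2 ++ v2 ++ y2.reverse).take k = x2 := by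
        rw [outer_take hk hkm hx2 hy2 hvl2 (le_refl k)]
        exact take_of_length_le (by omega)
      rw [← e1, ← e2, heq']
    have hye : y1 = y2 := by
      have e1 : (x1 ++ v1 ++ y1.reverse).drop (m - k) = y1.reverse := by
        rw [outer_drop hk hkm hx1 hy1 hvl1 (le_refl k), take_of_length_le (by omega)]
      have e2 : (x2 ++ v2 ++ y2.reverse).drop (m - k) = y2.reverse := by
        rw [outer_drop hk hkm hx2 hy2 hvl2 (le_refl k), take_of_length_le (by omega)]
      have h3 : y1.reverse = y2.reverse := by rw [← e1, ← e2, heq']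
      simpa using congrArg List.reverse h3
    subst hxe; subst hye
    have hve : v1 = v2 := by
      have := append_cancel_right heq'
      exact append_cancel_left this
    simp [hve]
  rw [← himg, Set.ncard_image_of_injOn hinj]
  have hprod : A.ncard = (TSet k).ncard * V.ncard := by
    rw [hA, ← Nat.card_coe_set_eq, ← Nat.card_coe_set_eq, ← Nat.card_coe_set_eq,
      Nat.card_congr (Equiv.Set.prod _ _), Nat.card_prod]
  have hVcard : V.ncard = 2 ^ (m - 2 * k) := by
    have e : ↥V ≃ List.Vector Bool (m - 2 * k) := Equiv.subtypeEquivRight fun v => Iff.rfl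
    rw [← Nat.card_coe_set_eq, Nat.card_congr e, Nat.card_eq_fintype_card, card_vector]
    simp
  rw [hprod, TSet_ncard hk, hVcard, pow_succ]
  ring
end

section
/- Let (u,v) be a mutually abelian-bordered pair of binary words with |u| = |v| = n ≥ 2, and set i = lsb(u,v) and j = lsb(v,u). Then i + j ≤ n if and only if there exist nonempty binary words α, β, β', α' and (possibly empty) binary words x, x' such that u = αxβ, v = β'x'α', β ~ β', α ~ α', |α| = j, |β| = i, and both (β, β') and (α, α') are mutually abelian-unbordered pairs. -/
/-- `(x, y)` is an internal abelian-border of `(u, v)`: `x` is a nonempty proper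
suffix of `u`, `y` is a proper prefix of `v`, and `x ~ y`. -/
def IsIntBorder (u v x y : List Bool) : Prop :=
  x ≠ [] ∧ x ≠ u ∧ x <:+ u ∧ y <+: v ∧ y ≠ v ∧ AbEq x y

/-- `(x, y)` is an external abelian-border of `(u, v)`: `x` is a nonempty proper
prefix of `u`, `y` is a proper suffix of `v`, and `x ~ y`. -/
def IsExtBorder (u v x y : List Bool) : Prop :=
  x ≠ [] ∧ x ≠ u ∧ x <+: u ∧ y <:+ v ∧ y ≠ v ∧ AbEq x y

/-- `(u, v)` has an internal abelian-border. -/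
def HasIntB (u v : List Bool) : Prop := ∃ x y, IsIntBorder u v x y

/-- `(u, v)` has an external abelian-border. -/
def HasExtB (u v : List Bool) : Prop := ∃ x y, IsExtBorder u v x y

/-- `(u, v)` is mutually abelian-bordered. -/
def MAB (u v : List Bool) : Prop := HasIntB u v ∧ HasExtB u v

/-- `(u, v)` is mutually abelian-unbordered. -/
def MAU (u v : List Bool) : Prop := ¬ HasIntB u v ∧ ¬ HasExtB u v

/-- `lsb u v` is the length of the shortest internal abelian-border of `(u, v)`:
the least `t` with `1 ≤ t ≤ |u| - 1` such that the suffix of `u` of length `t`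
is abelian equivalent to the prefix of `v` of length `t`. -/
noncomputable def lsb (u v : List Bool) : ℕ :=
  sInf {t | 1 ≤ t ∧ t ≤ u.length - 1 ∧ AbEq (u.drop (u.length - t)) (v.take t)}

/-!
The shortest internal abelian-border `(β, β')` of `(u, v)` is automatically mutually
abelian-unbordered: an internal border of `(β, β')` would be a shorter internal border of
`(u, v)`, and since `β ~ β'`, an external border of `(β, β')` leaves an internal one as its
complement. Applied to `(u, v)` and to `(v, u)` (whose internal borders are the external ones
of `(u, v)`), this yields the factorisation as soon as the two shortest borders do not overlap,
i.e. `i + j ≤ n`; the converse is a length count.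
-/

theorem List.IsSuffix.length_lt_of_ne {α : Type*} {l₁ l₂ : List α} (h : l₁ <:+ l₂)
    (hne : l₁ ≠ l₂) : l₁.length < l₂.length :=
  lt_of_le_of_ne h.length_le (mt h.eq_of_length hne)

theorem List.IsPrefix.length_lt_of_ne {α : Type*} {l₁ l₂ : List α} (h : l₁ <+: l₂)
    (hne : l₁ ≠ l₂) : l₁.length < l₂.length :=
  lt_of_le_of_ne h.length_le (mt h.eq_of_length hne)

theorem abEq_iff_perm {x y : List Bool} : AbEq x y ↔ x.Perm y := by
  rw [List.perm_iff_count, Bool.forall_bool, AbEq, and_comm]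

theorem AbEq.symm {x y : List Bool} (h : AbEq x y) : AbEq y x :=
  abEq_iff_perm.2 (abEq_iff_perm.1 h).symm

theorem AbEq.length_eq {x y : List Bool} (h : AbEq x y) : x.length = y.length :=
  (abEq_iff_perm.1 h).length_eq

theorem AbEq.of_append_of_abEq {x r s y : List Bool} (h : AbEq (x ++ r) (s ++ y))
    (hxy : AbEq x y) : AbEq r s := by
  rw [abEq_iff_perm] at *
  exact (List.perm_append_left_iff y).1
    (((hxy.append_right r).symm.trans h).trans List.perm_append_comm)

theorem isIntBorder_iff_isExtBorder_swap {u v x y : List Bool} :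
    IsIntBorder u v x y ↔ IsExtBorder v u y x := by
  constructor
  · rintro ⟨hx, hxu, hxs, hyp, hyv, hxy⟩
    refine ⟨fun hy => hx ?_, hyv, hyp, hxs, hxu, hxy.symm⟩
    simpa [hy] using hxy.length_eq
  · rintro ⟨hy, hyv, hyp, hxs, hxu, hyx⟩
    refine ⟨fun hx => hy ?_, hxu, hxs, hyp, hyv, hyx.symm⟩
    simpa [hx] using hyx.length_eq

theorem hasIntB_iff_hasExtB_swap {u v : List Bool} : HasIntB u v ↔ HasExtB v u :=
  ⟨fun ⟨x, y, h⟩ => ⟨y, x, isIntBorder_iff_isExtBorder_swap.1 h⟩,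
    fun ⟨y, x, h⟩ => ⟨x, y, isIntBorder_iff_isExtBorder_swap.2 h⟩⟩

theorem MAU.symm {u v : List Bool} (h : MAU u v) : MAU v u :=
  ⟨fun hi => h.2 (hasIntB_iff_hasExtB_swap.1 hi), fun he => h.1 (hasIntB_iff_hasExtB_swap.2 he)⟩

theorem HasExtB.hasIntB_of_abEq {b b' : List Bool} (hb : AbEq b b') (h : HasExtB b b') :
    HasIntB b b' := by
  obtain ⟨x, y, hx, hxb, ⟨r, rfl⟩, ⟨s, rfl⟩, hyb, hxy⟩ := h
  have hy : y ≠ [] := fun hy => hx (List.eq_nil_of_length_eq_zero (by simp [hxy.length_eq, hy]))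
  refine ⟨r, s, ?_, ?_, List.suffix_append x r, List.prefix_append s y, ?_,
    hb.of_append_of_abEq hxy⟩
  · rintro rfl
    exact hxb (List.append_nil x).symm
  · intro hr
    exact hx (by simpa using congrArg List.length hr)
  · intro hs
    exact hy (by simpa using congrArg List.length hs)

theorem mau_of_not_hasIntB {b b' : List Bool} (hb : AbEq b b') (h : ¬HasIntB b b') :
    MAU b b' :=
  ⟨h, fun he => h (he.hasIntB_of_abEq hb)⟩

theorem IsIntBorder.of_suffix_of_prefix {b b' u v x y : List Bool} (h : IsIntBorder b b' x y)
    (hbu : b <:+ u) (hbv : b' <+: v) : IsIntBorder u v x y := by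
  obtain ⟨hx, hxb, hxs, hyp, hyb, hxy⟩ := h
  have hxlt : x.length < b.length := hxs.length_lt_of_ne hxb
  have hylt : y.length < b'.length := hyp.length_lt_of_ne hyb
  refine ⟨hx, ?_, hxs.trans hbu, hyp.trans hbv, ?_, hxy⟩
  · rintro rfl
    exact absurd hbu.length_le (by omega)
  · rintro rfl
    exact absurd hbv.length_le (by omega)

theorem IsIntBorder.length_mem {u v x y : List Bool} (h : IsIntBorder u v x y) :
    x.length ∈
      {t | 1 ≤ t ∧ t ≤ u.length - 1 ∧ AbEq (u.drop (u.length - t)) (v.take t)} := by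
  obtain ⟨hx, hxu, hxs, hyp, -, hxy⟩ := h
  have hxlt : x.length < u.length := hxs.length_lt_of_ne hxu
  refine ⟨List.length_pos_iff.2 hx, by omega, ?_⟩
  rwa [← List.suffix_iff_eq_drop.1 hxs, hxy.length_eq, ← List.prefix_iff_eq_take.1 hyp]

theorem lsb_le_length {u v x y : List Bool} (h : IsIntBorder u v x y) : lsb u v ≤ x.length :=
  Nat.sInf_le h.length_mem

theorem lsb_mem {u v : List Bool} (h : HasIntB u v) :
    1 ≤ lsb u v ∧ lsb u v ≤ u.length - 1 ∧
      AbEq (u.drop (u.length - lsb u v)) (v.take (lsb u v)) :=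
  let ⟨_, _, hxy⟩ := h
  Nat.sInf_mem ⟨_, hxy.length_mem⟩

theorem mau_shortest_intBorder {u v : List Bool} (h : HasIntB u v) :
    MAU (u.drop (u.length - lsb u v)) (v.take (lsb u v)) := by
  refine mau_of_not_hasIntB (lsb_mem h).2.2 ?_
  rintro ⟨x, y, hxy⟩
  have hlt : x.length < lsb u v := by
    obtain ⟨-, hxb, hxs, -⟩ := hxy
    have := hxs.length_lt_of_ne hxb
    simp only [List.length_drop] at this
    omega
  have := lsb_le_length (hxy.of_suffix_of_prefix (List.drop_suffix _ _) (List.take_prefix _ _))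
  omega

theorem List.exists_eq_take_append_append_drop {α : Type*} (u : List α) (j i : ℕ)
    (h : j + i ≤ u.length) :
    ∃ x, u = u.take j ++ x ++ u.drop (u.length - i) := by
  refine ⟨(u.drop j).take (u.length - i - j), ?_⟩
  have hβ : u.drop (u.length - i) = (u.drop j).drop (u.length - i - j) := by
    rw [List.drop_drop]
    congr 1
    omega
  rw [hβ, List.append_assoc, List.take_append_drop, List.take_append_drop]

theorem stmt_1_general (n : ℕ) (u v : List Bool)
    (hu : u.length = n) (hv : v.length = n) (hmab : MAB u v)
    (i j : ℕ) (hi : i = lsb u v) (hj : j = lsb v u) :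
    i + j ≤ n ↔
      ∃ α β β' α' x x' : List Bool,
        α ≠ [] ∧ β ≠ [] ∧ β' ≠ [] ∧ α' ≠ [] ∧
        u = α ++ x ++ β ∧ v = β' ++ x' ++ α' ∧
        AbEq β β' ∧ AbEq α α' ∧ α.length = j ∧ β.length = i ∧
        MAU β β' ∧ MAU α α' := by
  obtain ⟨hint, hext⟩ := hmab
  have hint' : HasIntB v u := hasIntB_iff_hasExtB_swap.2 hext
  obtain ⟨hi1, hin, hβ⟩ := lsb_mem hint
  obtain ⟨hj1, hjn, hα⟩ := lsb_mem hint'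
  subst hu hi hj
  constructor
  · intro hij
    obtain ⟨x, hx⟩ := List.exists_eq_take_append_append_drop u (lsb v u) (lsb u v) (by omega)
    obtain ⟨x', hx'⟩ := List.exists_eq_take_append_append_drop v (lsb u v) (lsb v u) (by omega)
    have hlα : (u.take (lsb v u)).length = lsb v u := by simp only [List.length_take]; omega
    have hlβ : (u.drop (u.length - lsb u v)).length = lsb u v := by
      simp only [List.length_drop]; omega
    have hlβ' : (v.take (lsb u v)).length = lsb u v := by simp only [List.length_take]; omega
    have hlα' : (v.drop (v.length - lsb v u)).length = lsb v u := by
      simp only [List.length_drop]; omega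
    refine ⟨_, _, _, _, x, x', ?_, ?_, ?_, ?_, hx, hx', hβ, hα.symm, hlα, hlβ,
      mau_shortest_intBorder hint, (mau_shortest_intBorder hint').symm⟩ <;>
      exact List.ne_nil_of_length_pos (by omega)
  · rintro ⟨α, β, -, -, x, -, -, -, -, -, rfl, -, -, -, hαj, hβi, -, -⟩
    simp only [List.length_append]
    omega

theorem stmt_1 (n : ℕ) (hn : 2 ≤ n) (u v : List Bool)
    (hu : u.length = n) (hv : v.length = n) (hmab : MAB u v)
    (i j : ℕ) (hi : i = lsb u v) (hj : j = lsb v u) :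
    i + j ≤ n ↔
      ∃ α β β' α' x x' : List Bool,
        α ≠ [] ∧ β ≠ [] ∧ β' ≠ [] ∧ α' ≠ [] ∧
        u = α ++ x ++ β ∧ v = β' ++ x' ++ α' ∧
        AbEq β β' ∧ AbEq α α' ∧ α.length = j ∧ β.length = i ∧
        MAU β β' ∧ MAU α α' :=
  stmt_1_general n u v hu hv hmab i j hi hj
end

section
/- For every integer n ≥ 2, the number of mutually abelian-bordered pairs (u,v) of binary words with |u| = |v| = n and lsb(u,v) + lsb(v,u) = n + 1 equals 2·Σ_{i=2}^{n−1} Σ_{l=1}^{n−i} Σ_{m=l+1}^{i+l−1} (1/((i−1)(n−i)))·C(n−i, l)·C(n−i, l−1)·C(i−1, m−l)·C(i−1, m−l−1), where each summand is a nonnegative integer (the sum may be computed in the rationals). -/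
namespace SBP


open List

abbrev S := Bool × Bool

def val (c : S) : ℤ := (if c.1 then 1 else 0) - (if c.2 then 1 else 0)

def wsum (w : List S) : ℤ := (w.map val).sum

def psum (w : List S) (k : ℕ) : ℤ := wsum (w.take k)

@[simp] lemma wsum_nil : wsum [] = 0 := rfl

@[simp] lemma wsum_append (a b : List S) : wsum (a ++ b) = wsum a + wsum b := by
  simp [wsum]

@[simp] lemma wsum_cons (c : S) (a : List S) : wsum (c :: a) = val c + wsum a := by
  simp [wsum]

@[simp] lemma wsum_singleton (c : S) : wsum [c] = val c := by simp [wsum]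

@[simp] lemma psum_zero (w : List S) : psum w 0 = 0 := rfl

lemma psum_length (w : List S) : psum w w.length = wsum w := by
  simp [psum]

lemma psum_of_le (w : List S) {k : ℕ} (h : w.length ≤ k) : psum w k = wsum w := by
  simp [psum, List.take_of_length_le h]

lemma val_le_one (c : S) : val c ≤ 1 := by
  rcases c with ⟨a, b⟩; cases a <;> cases b <;> simp [val]

lemma neg_one_le_val (c : S) : -1 ≤ val c := by
  rcases c with ⟨a, b⟩; cases a <;> cases b <;> simp [val]

lemma val_eq_one_iff (c : S) : val c = 1 ↔ c = (true, false) := by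
  rcases c with ⟨a, b⟩; cases a <;> cases b <;> simp [val]

lemma val_eq_neg_one_iff (c : S) : val c = -1 ↔ c = (false, true) := by
  rcases c with ⟨a, b⟩; cases a <;> cases b <;> simp [val]

lemma psum_add (w : List S) (a j : ℕ) : psum w (a + j) = psum w a + psum (w.drop a) j := by
  unfold psum
  rw [List.take_add, wsum_append]

lemma psum_take (w : List S) (m k : ℕ) : psum (w.take m) k = psum w (min k m) := by
  unfold psum
  rw [List.take_take]

lemma psum_succ_sub (w : List S) (k : ℕ) :
    psum w (k + 1) - psum w k = wsum (w[k]?.toList.map (fun c => (c : S))) := by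
  unfold psum
  rw [List.take_succ, wsum_append]
  simp [wsum]

lemma psum_succ_le (w : List S) (k : ℕ) : psum w (k + 1) ≤ psum w k + 1 := by
  unfold psum
  rw [List.take_succ, wsum_append]
  rcases h : w[k]? with _ | c
  · simp [wsum]
  · have := val_le_one c
    simp [wsum]; omega

lemma psum_succ_ge (w : List S) (k : ℕ) : psum w k - 1 ≤ psum w (k + 1) := by
  unfold psum
  rw [List.take_succ, wsum_append]
  rcases h : w[k]? with _ | c
  · simp [wsum]
  · have := neg_one_le_val c
    simp [wsum]; omega

/-- discrete IVT -/
lemma exists_psum_zero (w : List S) : ∀ (b a : ℕ), a ≤ b → psum w a ≤ 0 → 0 ≤ psum w b →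
    ∃ c, a ≤ c ∧ c ≤ b ∧ psum w c = 0 := by
  intro b
  induction b with
  | zero => intro a ha h1 h2; exact ⟨0, by omega, le_refl _, by simp⟩
  | succ b ih =>
    intro a ha h1 h2
    by_cases hb : psum w (b + 1) ≤ 0
    · exact ⟨b + 1, by omega, le_refl _, le_antisymm hb h2⟩
    · push_neg at hb
      rcases Nat.eq_or_lt_of_le ha with rfl | ha'
      · omega
      · have h3 : 0 ≤ psum w b := by have := psum_succ_le w b; omega
        obtain ⟨c, hc1, hc2, hc3⟩ := ih a (by omega) h1 h3
        exact ⟨c, hc1, by omega, hc3⟩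



open List Finset

def Exc (i : ℕ) : Set (List S) := {w | w.length = i ∧ wsum w = 0 ∧ ∀ k, 0 < k → k < i → 0 < psum w k}

def NB (k : ℕ) : Set (List S) := {w | w.length = k ∧ wsum w = 0 ∧ ∀ j, 0 ≤ psum w j}

def NNB (k : ℕ) : Set (List S) := {w | w.length = k ∧ wsum w = 0 ∧ ∀ j, psum w j ≤ 0}

lemma finite_of_len {A : Set (List S)} {k : ℕ} (h : ∀ w ∈ A, w.length = k) : A.Finite :=
  (List.finite_length_eq S k).subset h

lemma Exc_finite (i : ℕ) : (Exc i).Finite := finite_of_len (fun w hw => hw.1)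
lemma NB_finite (k : ℕ) : (NB k).Finite := finite_of_len (fun w hw => hw.1)
lemma NNB_finite (k : ℕ) : (NNB k).Finite := finite_of_len (fun w hw => hw.1)

lemma ncard_prod {α β : Type*} (A : Set α) (B : Set β) :
    (A ×ˢ B).ncard = A.ncard * B.ncard := by
  rw [← Nat.card_coe_set_eq, ← Nat.card_coe_set_eq, ← Nat.card_coe_set_eq,
    ← Nat.card_prod]
  exact Nat.card_congr (Equiv.Set.prod A B)

lemma ncard_biUnion {ι α : Type*} (s : Finset ι) (f : ι → Set α)
    (hf : ∀ i ∈ s, (f i).Finite)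
    (hd : ∀ i ∈ s, ∀ j ∈ s, i ≠ j → Disjoint (f i) (f j)) :
    (⋃ i ∈ s, f i).ncard = ∑ i ∈ s, (f i).ncard := by
  classical
  induction s using Finset.induction with
  | empty => simp
  | @insert a s ha ih =>
    rw [Finset.sum_insert ha]
    have hunion : (⋃ i ∈ insert a s, f i) = f a ∪ ⋃ i ∈ s, f i := by
      simp [Set.biUnion_insert]
    rw [hunion, Set.ncard_union_eq
        (Set.disjoint_iUnion₂_right.mpr (fun i hi =>
          hd a (Finset.mem_insert_self a s) i (Finset.mem_insert_of_mem hi)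
            (by rintro rfl; exact ha hi)))
        (hf a (Finset.mem_insert_self a s))
        ((Set.Finite.biUnion (Finset.finite_toSet s))
          (fun i hi => hf i (Finset.mem_insert_of_mem hi))),
      ih (fun i hi => hf i (Finset.mem_insert_of_mem hi))
        (fun i hi j hj hij => hd i (Finset.mem_insert_of_mem hi) j (Finset.mem_insert_of_mem hj) hij)]

def app2 : List S × List S → List S := fun q => q.1 ++ q.2

lemma injOn_app2 {A B : Set (List S)} {r : ℕ} (hA : ∀ w ∈ A, w.length = r) :
    Set.InjOn app2 (A ×ˢ B) := by
  rintro ⟨a, b⟩ ⟨ha, hb⟩ ⟨a', b'⟩ ⟨ha', hb'⟩ h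
  have hlen : a.length = a'.length := by rw [hA a ha, hA a' ha']
  obtain ⟨h1, h2⟩ := List.append_inj h hlen
  exact Prod.ext h1 h2

lemma ncard_app2 {A B : Set (List S)} {r : ℕ} (hA : ∀ w ∈ A, w.length = r) :
    (app2 '' (A ×ˢ B)).ncard = A.ncard * B.ncard := by
  rw [Set.ncard_image_of_injOn (injOn_app2 hA), ncard_prod]

lemma Exc_one : Exc 1 = {[((true:Bool), (true:Bool))], [((false:Bool), (false:Bool))]} := by
  ext w
  constructor
  · rintro ⟨hlen, hsum, -⟩
    obtain ⟨c, rfl⟩ := List.length_eq_one_iff.mp hlen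
    rcases c with ⟨a, b⟩
    cases a <;> cases b <;> simp_all [val] <;> rfl
  · rintro (rfl | rfl) <;>
      exact ⟨rfl, by simp [val], fun k hk1 hk2 => absurd hk2 (by omega)⟩

lemma ncard_Exc_one : (Exc 1).ncard = 2 := by
  rw [Exc_one]
  rw [Set.ncard_pair (by simp)]

lemma Exc_eq {r : ℕ} (hr : 2 ≤ r) :
    Exc r = (fun m => ((true, false) : S) :: (m ++ [((false:Bool), (true:Bool))])) '' NB (r - 2) := by
  ext w
  constructor
  · rintro ⟨hlen, hsum, hpos⟩
    -- w = c0 :: middle ++ [clast]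
    have h1 : psum w 1 = 1 := by
      have hp : 0 < psum w 1 := hpos 1 one_pos (by omega)
      have := psum_succ_le w 0
      simp at this; omega
    have hlast : psum w (r - 1) = 1 := by
      have hp : 0 < psum w (r - 1) := hpos (r - 1) (by omega) (by omega)
      have h2 : psum w r = 0 := by rw [← hlen, psum_length, hsum]
      have h3 : r = (r - 1) + 1 := by omega
      have := psum_succ_ge w (r - 1)
      rw [← h3] at this; omega
    have hr1 : 1 ≤ w.length := by omega
    -- first letter
    have htake1 : w.take 1 = [((true, false) : S)] := by
      have hl1 : (w.take 1).length = 1 := by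
        rw [List.length_take]; omega
      obtain ⟨c, hc⟩ := List.length_eq_one_iff.mp hl1
      have hv : val c = 1 := by
        have : wsum (w.take 1) = 1 := h1
        rw [hc] at this; simpa using this
      rw [hc, (val_eq_one_iff c).mp hv]
    -- last letter
    have hwr : psum w r = 0 := by rw [← hlen, psum_length, hsum]
    have hdroplast : w.drop (r - 1) = [((false, true) : S)] := by
      have hl1 : (w.drop (r - 1)).length = 1 := by
        rw [List.length_drop]; omega
      obtain ⟨c, hc⟩ := List.length_eq_one_iff.mp hl1
      have h4 : psum w ((r - 1) + 1) = psum w (r - 1) + psum (w.drop (r - 1)) 1 := psum_add w (r - 1) 1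
      have h5 : (r - 1) + 1 = r := by omega
      have h6 : psum (w.drop (r - 1)) 1 = val c := by
        rw [hc]; simp [psum, wsum]
      rw [h5, hwr, hlast, h6] at h4
      have hv : val c = -1 := by omega
      rw [hc, (val_eq_neg_one_iff c).mp hv]
    set m := (w.drop 1).take (r - 2) with hm
    have hmlen : m.length = r - 2 := by
      rw [hm, List.length_take, List.length_drop]; omega
    have hpsum_m : ∀ j, psum m j = psum w (1 + min j (r - 2)) - 1 := by
      intro j
      rw [hm, psum_take]
      have := psum_add w 1 (min j (r - 2))
      omega
    have hmsum : wsum m = 0 := by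
      have := hpsum_m (r - 2)
      rw [psum_of_le m (le_of_eq hmlen), min_self] at this
      have h7 : 1 + (r - 2) = r - 1 := by omega
      rw [h7, hlast] at this; omega
    have hmnn : ∀ j, 0 ≤ psum m j := by
      intro j
      rw [hpsum_m j]
      have hrange : 0 < 1 + min j (r - 2) ∧ 1 + min j (r - 2) < r := by omega
      have := hpos _ hrange.1 hrange.2
      omega
    refine ⟨m, ⟨hmlen, hmsum, hmnn⟩, ?_⟩
    have hsplit1 : w = w.take 1 ++ w.drop 1 := (List.take_append_drop 1 w).symm
    have hsplit2 : w.drop 1 = m ++ (w.drop 1).drop (r - 2) := (List.take_append_drop (r - 2) (w.drop 1)).symm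
    have hsplit3 : (w.drop 1).drop (r - 2) = w.drop (r - 1) := by
      rw [List.drop_drop]
      congr 1
      omega
    rw [hsplit1, hsplit2, hsplit3, htake1, hdroplast]
    rfl
  · rintro ⟨m, ⟨hmlen, hmsum, hm⟩, rfl⟩
    refine ⟨by simp [hmlen]; omega, by simp [val, hmsum], ?_⟩
    intro k hk1 hk2
    have hk : k - 1 ≤ m.length := by omega
    have : psum (((true, false) : S) :: (m ++ [((false:Bool), (true:Bool))])) k
        = 1 + psum (m ++ [((false:Bool), (true:Bool))]) (k - 1) := by
      have hks : k = 1 + (k - 1) := by omega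
      rw [hks, psum_add]
      simp [psum, val]
    rw [this]
    rcases Nat.lt_or_ge (k - 1) m.length with h | h
    · have : psum (m ++ [((false:Bool), (true:Bool))]) (k - 1) = psum m (k - 1) := by
        unfold psum; rw [List.take_append_of_le_length (by omega)]
      rw [this]
      have := hm (k - 1); omega
    · have hkk : k - 1 = m.length := by omega
      have : psum (m ++ [((false:Bool), (true:Bool))]) (k - 1) = wsum m := by
        rw [hkk]
        unfold psum; rw [List.take_append_of_le_length (le_refl _), List.take_length]
      rw [this, hmsum]; omega

lemma psum_append_left {e : List S} (b : List S) {t : ℕ} (h : t ≤ e.length) :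
    psum (e ++ b) t = psum e t := by
  unfold psum; rw [List.take_append_of_le_length h]

lemma psum_append_right (e b : List S) (j : ℕ) :
    psum (e ++ b) (e.length + j) = wsum e + psum b j := by
  rw [psum_add, List.drop_left]
  congr 1
  rw [psum_append_left b (le_refl _), psum_length]

lemma mem_app2_fr {r : ℕ} {B : Set (List S)} {w : List S}
    (hw : w ∈ app2 '' (Exc r ×ˢ B)) :
    psum w r = 0 ∧ (∀ t, 0 < t → t < r → 0 < psum w t) := by
  obtain ⟨⟨e, b⟩, ⟨⟨helen, hesum, hepos⟩, -⟩, rfl⟩ := hw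
  have helen : e.length = r := helen
  have hesum : wsum e = 0 := hesum
  have hepos : ∀ t, 0 < t → t < r → 0 < psum e t := hepos
  constructor
  · rw [show app2 (e, b) = e ++ b from rfl, psum_append_left b (by omega), ← helen,
      psum_length, hesum]
  · intro t ht1 ht2
    rw [show app2 (e, b) = e ++ b from rfl, psum_append_left b (by omega)]
    exact hepos t ht1 ht2

lemma NB_parts_disj (k : ℕ) : ∀ r ∈ Finset.Icc 1 (k+1), ∀ r' ∈ Finset.Icc 1 (k+1), r ≠ r' →
    Disjoint (app2 '' (Exc r ×ˢ NB (k+1-r))) (app2 '' (Exc r' ×ˢ NB (k+1-r'))) := by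
  have key : ∀ r r' : ℕ, 1 ≤ r → r < r' →
      Disjoint (app2 '' (Exc r ×ˢ NB (k+1-r))) (app2 '' (Exc r' ×ˢ NB (k+1-r'))) := by
    intro r r' hr1 hrr
    rw [Set.disjoint_left]
    intro w hw hw'
    obtain ⟨hz, -⟩ := mem_app2_fr hw
    obtain ⟨-, hpos⟩ := mem_app2_fr hw'
    have := hpos r (by omega) hrr
    omega
  intro r hr r' hr' hne
  simp only [Finset.mem_Icc] at hr hr'
  rcases Nat.lt_or_ge r r' with h | h
  · exact key r r' (by omega) h
  · exact (key r' r (by omega) (by omega)).symm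

lemma NB_succ_eq (k : ℕ) :
    NB (k+1) = ⋃ r ∈ Finset.Icc 1 (k+1), app2 '' (Exc r ×ˢ NB (k+1-r)) := by
  ext w
  simp only [Set.mem_iUnion, exists_prop]
  constructor
  · rintro ⟨hlen, hsum, hnn⟩
    set T : Set ℕ := {t | 1 ≤ t ∧ psum w t = 0} with hT
    have hTne : (k+1) ∈ T := by
      constructor
      · omega
      · rw [← hlen, psum_length, hsum]
    set r := sInf T with hrdef
    have hrT : r ∈ T := Nat.sInf_mem ⟨k+1, hTne⟩
    have hrle : r ≤ k + 1 := Nat.sInf_le hTne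
    have hr1 : 1 ≤ r := hrT.1
    have hrz : psum w r = 0 := hrT.2
    refine ⟨r, by simp [Finset.mem_Icc]; omega, (w.take r, w.drop r), ⟨⟨?_, ?_, ?_⟩, ?_, ?_, ?_⟩, ?_⟩
    · show (w.take r).length = r
      rw [List.length_take]; omega
    · show wsum (w.take r) = 0
      exact hrz
    · show ∀ t, 0 < t → t < r → 0 < psum (w.take r) t
      intro t ht1 ht2
      rw [psum_take, min_eq_left (le_of_lt ht2)]
      have hnz : psum w t ≠ 0 := by
        intro hz
        have : r ≤ t := Nat.sInf_le ⟨ht1, hz⟩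
        omega
      have := hnn t
      omega
    · show (w.drop r).length = k + 1 - r
      rw [List.length_drop]; omega
    · show wsum (w.drop r) = 0
      have hw1 : psum w (k+1) = wsum w := by rw [← hlen, psum_length]
      have h1 := psum_add w r (k + 1 - r)
      rw [show r + (k+1-r) = k+1 from by omega, hw1, hsum] at h1
      rw [← psum_length, List.length_drop, hlen]
      omega
    · show ∀ j, 0 ≤ psum (w.drop r) j
      intro j
      have h1 := psum_add w r j
      have := hnn (r + j)
      omega
    · exact (List.take_append_drop r w)
  · rintro ⟨r, hr, ⟨e, b⟩, ⟨⟨helen, hesum, hepos⟩, ⟨hblen, hbsum, hbnn⟩⟩, rfl⟩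
    have helen : e.length = r := helen
    have hesum : wsum e = 0 := hesum
    have hepos : ∀ t, 0 < t → t < r → 0 < psum e t := hepos
    have hblen : b.length = k + 1 - r := hblen
    have hbsum : wsum b = 0 := hbsum
    have hbnn : ∀ j, 0 ≤ psum b j := hbnn
    simp only [Finset.mem_Icc] at hr
    have happ : app2 (e, b) = e ++ b := rfl
    refine ⟨?_, ?_, ?_⟩
    · rw [happ, List.length_append, helen, hblen]; omega
    · rw [happ, wsum_append, hesum, hbsum]; ring
    · intro j
      rcases Nat.lt_or_ge j r with h | h
      · rw [happ, psum_append_left b (by omega)]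
        rcases Nat.eq_zero_or_pos j with rfl | hj
        · simp
        · exact le_of_lt (hepos j hj h)
      · have h2 := psum_append_right e b (j - e.length)
        rw [show e.length + (j - e.length) = j from by omega] at h2
        rw [happ, h2, hesum]
        have := hbnn (j - e.length)
        omega

lemma NB_zero : NB 0 = {([] : List S)} := by
  ext w
  constructor
  · rintro ⟨hlen, -, -⟩
    exact List.length_eq_zero_iff.mp hlen
  · rintro rfl
    exact ⟨rfl, rfl, fun j => by simp [psum]⟩

lemma catalan_rec_aux (k : ℕ) :
    2 * catalan (k+1) + ∑ r ∈ Finset.Icc 2 (k+1), catalan (r-1) * catalan (k+2-r) = catalan (k+2) := by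
  have h := catalan_succ' (k+1)
  rw [Finset.Nat.sum_antidiagonal_eq_sum_range_succ_mk] at h
  rw [Finset.sum_range_succ, Finset.sum_range_succ'] at h
  have hre : ∑ r ∈ Finset.Icc 2 (k+1), catalan (r-1) * catalan (k+2-r)
      = ∑ i ∈ Finset.range k, catalan (i+1) * catalan (k-i) := by
    refine Finset.sum_nbij' (fun r => r - 2) (fun i => i + 2) ?_ ?_ ?_ ?_ ?_
    · intro a ha; simp only [Finset.mem_Icc] at ha; simp only [Finset.mem_range]; omega
    · intro a ha; simp only [Finset.mem_range] at ha; simp only [Finset.mem_Icc]; omega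
    · intro a ha; simp only [Finset.mem_Icc] at ha; omega
    · intro a ha; simp only [Finset.mem_range] at ha; omega
    · intro a ha; simp only [Finset.mem_Icc] at ha
      have e1 : a - 2 + 1 = a - 1 := by omega
      have e2 : k - (a - 2) = k + 2 - a := by omega
      rw [e1, e2]
  have hre2 : ∀ i ∈ Finset.range k, catalan (i+1) * catalan (k+1-(i+1)) = catalan (i+1) * catalan (k-i) := by
    intro i _
    congr 2
    omega
  rw [Finset.sum_congr rfl hre2] at h
  simp only [catalan_zero, Nat.sub_zero, Nat.sub_self, one_mul, mul_one] at h
  rw [show k + 1 + 1 = k + 2 from rfl] at h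
  rw [hre]
  omega

lemma ncard_NB : ∀ k, (NB k).ncard = catalan (k+1) := by
  intro k
  induction k using Nat.strong_induction_on with
  | _ k ih =>
    match k with
    | 0 => rw [NB_zero, Set.ncard_singleton, catalan_one]
    | (k+1) =>
      rw [NB_succ_eq k, ncard_biUnion _ _
        (fun r _ => Set.Finite.image _ (((Exc_finite r).prod (NB_finite _))))
        (NB_parts_disj k)]
      have hsplit : Finset.Icc 1 (k+1) = insert 1 (Finset.Icc 2 (k+1)) := by
        ext x; simp [Finset.mem_Icc, Finset.mem_insert]; omega
      rw [hsplit, Finset.sum_insert (by simp [Finset.mem_Icc])]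
      have h1 : (app2 '' (Exc 1 ×ˢ NB (k+1-1))).ncard = 2 * catalan (k+1) := by
        rw [ncard_app2 (fun w hw => hw.1), ncard_Exc_one]
        rw [show k + 1 - 1 = k from by omega, ih k (by omega)]
      have h2 : ∀ r ∈ Finset.Icc 2 (k+1),
          (app2 '' (Exc r ×ˢ NB (k+1-r))).ncard = catalan (r-1) * catalan (k+2-r) := by
        intro r hr
        simp only [Finset.mem_Icc] at hr
        rw [ncard_app2 (fun w hw => hw.1)]
        have he : (Exc r).ncard = catalan (r-1) := by
          rw [Exc_eq hr.1, Set.ncard_image_of_injOn (fun a _ b _ hab => by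
            simpa using hab)]
          rw [ih (r-2) (by omega)]
          congr 1
          omega
        have hb : (NB (k+1-r)).ncard = catalan (k+2-r) := by
          rw [ih (k+1-r) (by omega)]
          congr 1
          omega
        rw [he, hb]
      rw [h1, Finset.sum_congr rfl h2, catalan_rec_aux k]

lemma wsum_swap (w : List S) : wsum (w.map Prod.swap) = - wsum w := by
  induction w with
  | nil => simp
  | cons c w ih =>
    simp only [List.map_cons, wsum_cons, ih]
    have : val (Prod.swap c) = - val c := by
      rcases c with ⟨a, b⟩; cases a <;> cases b <;> simp [val]
    rw [this]; ring

lemma psum_swap (w : List S) (k : ℕ) : psum (w.map Prod.swap) k = - psum w k := by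
  unfold psum
  rw [← List.map_take, wsum_swap]

lemma NNB_eq (k : ℕ) : NNB k = (List.map Prod.swap) '' NB k := by
  ext w
  constructor
  · rintro ⟨hlen, hsum, hnp⟩
    refine ⟨w.map Prod.swap, ⟨by simpa using hlen, by rw [wsum_swap, hsum]; ring, fun j => by
      rw [psum_swap]; have := hnp j; omega⟩, ?_⟩
    simp [Function.comp, List.map_map]
  · rintro ⟨m, ⟨hlen, hsum, hnn⟩, rfl⟩
    refine ⟨by simpa using hlen, by rw [wsum_swap, hsum]; ring, fun j => by
      rw [psum_swap]; have := hnn j; omega⟩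

lemma map_swap_injective : Function.Injective (List.map (Prod.swap : S → S)) :=
  List.map_injective_iff.mpr Prod.swap_injective

lemma ncard_NNB (k : ℕ) : (NNB k).ncard = catalan (k+1) := by
  rw [NNB_eq, Set.ncard_image_of_injOn (map_swap_injective.injOn), ncard_NB]

lemma ncard_Exc {r : ℕ} (hr : 2 ≤ r) : (Exc r).ncard = catalan (r-1) := by
  rw [Exc_eq hr, Set.ncard_image_of_injOn (fun a _ b _ hab => by simpa using hab),
    ncard_NB]
  congr 1
  omega



open List Finset

def Sone (n : ℕ) (w : List S) : Set ℕ := {t | 1 ≤ t ∧ t ≤ n - 1 ∧ psum w t = 0}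

def Stwo (n : ℕ) (w : List S) : Set ℕ := {t | 1 ≤ t ∧ t ≤ n - 1 ∧ psum w (n - t) = wsum w}

def Cond (n : ℕ) (w : List S) : Prop :=
  (Sone n w).Nonempty ∧ (Stwo n w).Nonempty ∧ sInf (Sone n w) + sInf (Stwo n w) = n + 1

def WS (n : ℕ) : Set (List S) := {w | w.length = n ∧ Cond n w}

def app3 : List S × List S → List S := fun q => q.1 ++ (q.2 ++ [((true:Bool), (false:Bool))])

def Gp (n i : ℕ) : Set (List S) := app3 '' (Exc i ×ˢ NNB (n - 1 - i))

lemma Gp_psum {n i : ℕ} (hn : 2 ≤ n) (hi1 : 2 ≤ i) (hi2 : i ≤ n - 1) {w : List S}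
    (hw : w ∈ Gp n i) :
    w.length = n ∧ wsum w = 1 ∧ psum w i = 0 ∧ (∀ k, 0 < k → k < i → 0 < psum w k) ∧
      (∀ j, i ≤ j → j ≤ n - 1 → psum w j ≤ 0) ∧ psum w (i - 1) = 1 := by
  obtain ⟨⟨e, b⟩, ⟨he, hb⟩, rfl⟩ := hw
  obtain ⟨helen, hesum, hepos⟩ : e.length = i ∧ wsum e = 0 ∧ ∀ k, 0 < k → k < i → 0 < psum e k := he
  obtain ⟨hblen, hbsum, hbnp⟩ : b.length = n - 1 - i ∧ wsum b = 0 ∧ ∀ j, psum b j ≤ 0 := hb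
  have happ : app3 (e, b) = e ++ (b ++ [((true:Bool), (false:Bool))]) := rfl
  rw [happ]
  set w := e ++ (b ++ [((true:Bool), (false:Bool))]) with hwdef
  have hlen : w.length = n := by
    rw [hwdef]; simp [helen, hblen]; omega
  have hleft : ∀ k, k ≤ i → psum w k = psum e k := by
    intro k hk
    rw [hwdef, psum_append_left _ (by omega)]
  have hzero : psum w i = 0 := by
    rw [hleft i (le_refl i), ← helen, psum_length, hesum]
  have hpos : ∀ k, 0 < k → k < i → 0 < psum w k := by
    intro k h1 h2
    rw [hleft k (le_of_lt h2)]
    exact hepos k h1 h2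
  have hmid : ∀ j, i ≤ j → j ≤ n - 1 → psum w j ≤ 0 := by
    intro j h1 h2
    have h3 : j = e.length + (j - i) := by omega
    rw [hwdef, h3, psum_append_right, hesum]
    have h4 : j - i ≤ b.length := by omega
    rw [psum_append_left _ h4]
    have := hbnp (j - i)
    omega
  have hprev : psum w (i - 1) = 1 := by
    have h1 : 0 < psum w (i - 1) := hpos (i - 1) (by omega) (by omega)
    have h2 := psum_succ_ge w (i - 1)
    rw [show (i - 1) + 1 = i from by omega, hzero] at h2
    omega
  have hws : wsum w = 1 := by
    rw [hwdef]; simp [hesum, hbsum, val]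
  exact ⟨hlen, hws, hzero, hpos, hmid, hprev⟩

lemma Gp_mem {n i : ℕ} (hn : 2 ≤ n) (hi1 : 2 ≤ i) (hi2 : i ≤ n - 1) {w : List S}
    (hw : w ∈ Gp n i) :
    w ∈ WS n ∧ wsum w = 1 ∧ sInf (Sone n w) = i := by
  obtain ⟨hlen, hws, hzero, hpos, hmid, hprev⟩ := Gp_psum hn hi1 hi2 hw
  have hiS : i ∈ Sone n w := ⟨by omega, by omega, hzero⟩
  have hSone_inf : sInf (Sone n w) = i := by
    refine le_antisymm (Nat.sInf_le hiS) (le_csInf ⟨i, hiS⟩ ?_)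
    rintro t ⟨ht1, ht2, ht3⟩
    by_contra hlt
    push_neg at hlt
    have := hpos t (by omega) (by omega)
    omega
  have ht0S : (n + 1 - i) ∈ Stwo n w := by
    refine ⟨by omega, by omega, ?_⟩
    rw [show n - (n + 1 - i) = i - 1 from by omega, hprev, hws]
  have hStwo_inf : sInf (Stwo n w) = n + 1 - i := by
    refine le_antisymm (Nat.sInf_le ht0S) (le_csInf ⟨_, ht0S⟩ ?_)
    rintro t ⟨ht1, ht2, ht3⟩
    by_contra hlt
    push_neg at hlt
    have hj1 : i ≤ n - t := by omega
    have hj2 : n - t ≤ n - 1 := by omega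
    have := hmid (n - t) hj1 hj2
    rw [ht3, hws] at this
    omega
  exact ⟨⟨hlen, ⟨i, hiS⟩, ⟨_, ht0S⟩, by rw [hSone_inf, hStwo_inf]; omega⟩, hws, hSone_inf⟩

lemma WS_wsum_aux {n : ℕ} (hn : 2 ≤ n) {w : List S} (hw : w ∈ WS n) :
    2 ≤ sInf (Sone n w) ∧ sInf (Sone n w) ≤ n - 1 ∧
      psum w (sInf (Sone n w)) = 0 ∧ psum w (sInf (Sone n w) - 1) = wsum w ∧
      (wsum w = 1 ∨ wsum w = -1) := by
  obtain ⟨hlen, h1ne, h2ne, hsum⟩ := hw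
  set i := sInf (Sone n w) with hidef
  set t' := sInf (Stwo n w) with htdef
  obtain ⟨hi1, hi2, hiz⟩ : 1 ≤ i ∧ i ≤ n - 1 ∧ psum w i = 0 := Nat.sInf_mem h1ne
  obtain ⟨ht1, ht2, htz⟩ : 1 ≤ t' ∧ t' ≤ n - 1 ∧ psum w (n - t') = wsum w := Nat.sInf_mem h2ne
  have hws_ne : wsum w ≠ 0 := by
    intro h0
    have : (n - i) ∈ Stwo n w := by
      refine ⟨by omega, by omega, ?_⟩
      rw [show n - (n - i) = i from by omega, hiz, h0]
    have := Nat.sInf_le this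
    omega
  have hii : 2 ≤ i := by
    rcases Nat.lt_or_ge i 2 with h | h
    · exfalso
      have hi1' : i = 1 := by omega
      have : n - t' = 0 := by omega
      rw [this] at htz
      simp at htz
      exact hws_ne htz.symm
    · exact h
  have hprev : psum w (i - 1) = wsum w := by
    rw [show i - 1 = n - t' from by omega]
    exact htz
  have hpm : wsum w = 1 ∨ wsum w = -1 := by
    have h2 := psum_succ_ge w (i - 1)
    have h3 := psum_succ_le w (i - 1)
    rw [show (i - 1) + 1 = i from by omega, hiz] at h2 h3
    rw [hprev] at h2 h3
    omega
  exact ⟨hii, hi2, hiz, hprev, hpm⟩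

lemma WSp_subset {n : ℕ} (hn : 2 ≤ n) {w : List S} (hw : w ∈ WS n) (hws : wsum w = 1) :
    ∃ i, 2 ≤ i ∧ i ≤ n - 1 ∧ w ∈ Gp n i := by
  obtain ⟨hii, hi2, hiz, hprev, -⟩ := WS_wsum_aux hn hw
  obtain ⟨hlen, h1ne, h2ne, hsum⟩ := hw
  set i := sInf (Sone n w) with hidef
  set t' := sInf (Stwo n w) with htdef
  rw [hws] at hprev
  -- positivity on (0, i)
  have hpos : ∀ k, 0 < k → k < i → 0 < psum w k := by
    intro k hk1 hk2
    by_contra hle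
    push_neg at hle
    obtain ⟨c, hc1, hc2, hc3⟩ := exists_psum_zero w (i - 1) k (by omega) hle (by omega)
    have : c ∈ Sone n w := ⟨by omega, by omega, hc3⟩
    have := Nat.sInf_le this
    omega
  -- nonpositivity on [i, n-1]
  have hne1 : ∀ j, i ≤ j → j ≤ n - 1 → psum w j ≠ 1 := by
    intro j hj1 hj2 heq
    have : (n - j) ∈ Stwo n w := by
      refine ⟨by omega, by omega, ?_⟩
      rw [show n - (n - j) = j from by omega, heq, hws]
    have := Nat.sInf_le this
    omega
  have hmid : ∀ d, i + d ≤ n - 1 → psum w (i + d) ≤ 0 := by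
    intro d
    induction d with
    | zero => intro _; simpa using le_of_eq hiz
    | succ d ih =>
      intro hd
      have h1 := ih (by omega)
      have h2 := psum_succ_le w (i + d)
      have h3 := hne1 (i + d + 1) (by omega) (by omega)
      rw [show i + (d + 1) = i + d + 1 from by omega]
      omega
  have hn1 : psum w (n - 1) = 0 := by
    have h1 := hmid (n - 1 - i) (by omega)
    rw [show i + (n - 1 - i) = n - 1 from by omega] at h1
    have h2 : psum w n = 1 := by rw [← hlen, psum_length, hws]
    have h3 := psum_succ_le w (n - 1)
    rw [show (n - 1) + 1 = n from by omega, h2] at h3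
    omega
  -- last letter
  have hlast : w.drop (n - 1) = [((true:Bool), (false:Bool))] := by
    have hl1 : (w.drop (n - 1)).length = 1 := by rw [List.length_drop]; omega
    obtain ⟨c, hc⟩ := List.length_eq_one_iff.mp hl1
    have h4 := psum_add w (n - 1) 1
    have h6 : psum (w.drop (n - 1)) 1 = val c := by rw [hc]; simp [psum, wsum]
    rw [show (n - 1) + 1 = n from by omega, ← hlen, psum_length, hws] at h4
    rw [hlen] at h4
    rw [hn1, h6] at h4
    have hv : val c = 1 := by omega
    rw [hc, (val_eq_one_iff c).mp hv]
  set e := w.take i with hedef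
  set b := (w.drop i).take (n - 1 - i) with hbdef
  have he : e ∈ Exc i := by
    refine ⟨by rw [hedef, List.length_take]; omega, ?_, ?_⟩
    · rw [hedef, ← psum_length, List.length_take, psum_take]
      have : min (min i w.length) i = i := by omega
      rw [this, hiz]
    · intro k hk1 hk2
      rw [hedef, psum_take, min_eq_left (le_of_lt hk2)]
      exact hpos k hk1 hk2
  have hb : b ∈ NNB (n - 1 - i) := by
    refine ⟨by rw [hbdef, List.length_take, List.length_drop]; omega, ?_, ?_⟩
    · rw [hbdef, ← psum_length, List.length_take, List.length_drop, psum_take]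
      have hmin : min (min (n - 1 - i) (w.length - i)) (n - 1 - i) = n - 1 - i := by omega
      rw [hmin]
      have h1 := psum_add w i (n - 1 - i)
      rw [show i + (n - 1 - i) = n - 1 from by omega, hn1, hiz] at h1
      omega
    · intro j
      rw [hbdef, psum_take]
      have h1 := psum_add w i (min j (n - 1 - i))
      have h2 := hmid (min j (n - 1 - i)) (by omega)
      omega
  refine ⟨i, hii, hi2, (e, b), ⟨he, hb⟩, ?_⟩
  have happ : app3 (e, b) = e ++ (b ++ [((true:Bool), (false:Bool))]) := rfl
  have hdd : w.drop (n - 1) = (w.drop i).drop (n - 1 - i) := by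
    rw [List.drop_drop]
    congr 1
    omega
  rw [happ, ← hlast, hbdef, hedef, hdd, List.take_append_drop, List.take_append_drop]

lemma WSp_eq {n : ℕ} (hn : 2 ≤ n) :
    {w | w ∈ WS n ∧ wsum w = 1} = ⋃ i ∈ Finset.Icc 2 (n - 1), Gp n i := by
  ext w
  simp only [Set.mem_iUnion, exists_prop, Set.mem_setOf_eq]
  constructor
  · rintro ⟨hw, hws⟩
    obtain ⟨i, hi1, hi2, hmem⟩ := WSp_subset hn hw hws
    exact ⟨i, by simp [Finset.mem_Icc]; omega, hmem⟩
  · rintro ⟨i, hi, hmem⟩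
    simp only [Finset.mem_Icc] at hi
    obtain ⟨h1, h2, -⟩ := Gp_mem hn hi.1 hi.2 hmem
    exact ⟨h1, h2⟩

lemma Gp_disj {n : ℕ} (hn : 2 ≤ n) :
    ∀ i ∈ Finset.Icc 2 (n - 1), ∀ j ∈ Finset.Icc 2 (n - 1), i ≠ j →
      Disjoint (Gp n i) (Gp n j) := by
  intro i hi j hj hne
  simp only [Finset.mem_Icc] at hi hj
  rw [Set.disjoint_left]
  intro w hwi hwj
  obtain ⟨-, -, h1⟩ := Gp_mem hn hi.1 hi.2 hwi
  obtain ⟨-, -, h2⟩ := Gp_mem hn hj.1 hj.2 hwj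
  exact hne (h1 ▸ h2 ▸ rfl)

lemma Gp_finite (n i : ℕ) : (Gp n i).Finite :=
  Set.Finite.image _ ((Exc_finite i).prod (NNB_finite _))

lemma ncard_Gp {n i : ℕ} (hi1 : 2 ≤ i) (hi2 : i ≤ n - 1) :
    (Gp n i).ncard = catalan (i - 1) * catalan (n - i) := by
  have hGp : Gp n i = app2 ''
      (Exc i ×ˢ ((fun b => b ++ [((true:Bool), (false:Bool))]) '' NNB (n - 1 - i))) := by
    ext w
    constructor
    · rintro ⟨⟨e, b⟩, ⟨he, hb⟩, rfl⟩
      exact ⟨(e, b ++ [((true:Bool), (false:Bool))]), ⟨he, ⟨b, hb, rfl⟩⟩, rfl⟩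
    · rintro ⟨⟨e, b'⟩, ⟨he, ⟨b, hb, rfl⟩⟩, rfl⟩
      exact ⟨(e, b), ⟨he, hb⟩, rfl⟩
  rw [hGp, ncard_app2 (fun w hw => hw.1),
    Set.ncard_image_of_injOn (fun a _ b _ hab => by simpa using hab),
    ncard_Exc hi1, ncard_NNB]
  rw [show n - 1 - i + 1 = n - i from by omega]

lemma WS_swap {n : ℕ} {w : List S} (hw : w ∈ WS n) : (w.map Prod.swap) ∈ WS n := by
  obtain ⟨hlen, h1ne, h2ne, hsum⟩ := hw
  have hS1 : Sone n (w.map Prod.swap) = Sone n w := by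
    ext t
    unfold Sone
    simp only [Set.mem_setOf_eq, psum_swap]
    constructor <;> rintro ⟨a, b, c⟩ <;> exact ⟨a, b, by omega⟩
  have hS2 : Stwo n (w.map Prod.swap) = Stwo n w := by
    ext t
    unfold Stwo
    simp only [Set.mem_setOf_eq, psum_swap, wsum_swap]
    constructor <;> rintro ⟨a, b, c⟩ <;> exact ⟨a, b, by omega⟩
  exact ⟨by simpa using hlen, by rw [hS1]; exact h1ne, by rw [hS2]; exact h2ne,
    by rw [hS1, hS2]; exact hsum⟩

lemma WS_finite (n : ℕ) : (WS n).Finite := finite_of_len (fun w hw => hw.1)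

lemma ncard_WS {n : ℕ} (hn : 2 ≤ n) :
    (WS n).ncard = 2 * ∑ i ∈ Finset.Icc 2 (n - 1), catalan (i - 1) * catalan (n - i) := by
  have hdecomp : WS n = {w | w ∈ WS n ∧ wsum w = 1} ∪ {w | w ∈ WS n ∧ wsum w = -1} := by
    ext w
    simp only [Set.mem_union, Set.mem_setOf_eq]
    constructor
    · intro hw
      rcases (WS_wsum_aux hn hw).2.2.2.2 with h | h
      · exact Or.inl ⟨hw, h⟩
      · exact Or.inr ⟨hw, h⟩
    · rintro (⟨h, -⟩ | ⟨h, -⟩) <;> exact h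
  have hneg : {w | w ∈ WS n ∧ wsum w = -1} = (List.map Prod.swap) '' {w | w ∈ WS n ∧ wsum w = 1} := by
    ext w
    simp only [Set.mem_image, Set.mem_setOf_eq]
    constructor
    · rintro ⟨hw, hws⟩
      refine ⟨w.map Prod.swap, ⟨WS_swap hw, by simp [wsum_swap, hws]⟩, ?_⟩
      simp [List.map_map, Function.comp]
    · rintro ⟨m, ⟨hm, hms⟩, rfl⟩
      exact ⟨WS_swap hm, by simp [wsum_swap, hms]⟩
  have hfin1 : {w | w ∈ WS n ∧ wsum w = 1}.Finite := (WS_finite n).subset (fun w hw => hw.1)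
  have hfin2 : {w | w ∈ WS n ∧ wsum w = -1}.Finite := (WS_finite n).subset (fun w hw => hw.1)
  have hdisj : Disjoint {w | w ∈ WS n ∧ wsum w = 1} {w | w ∈ WS n ∧ wsum w = -1} := by
    rw [Set.disjoint_left]
    rintro w ⟨-, h1⟩ ⟨-, h2⟩
    rw [h1] at h2
    norm_num at h2
  rw [hdecomp, Set.ncard_union_eq hdisj hfin1 hfin2, hneg,
    Set.ncard_image_of_injOn (map_swap_injective.injOn)]
  have hcount : {w | w ∈ WS n ∧ wsum w = 1}.ncard
      = ∑ i ∈ Finset.Icc 2 (n - 1), catalan (i - 1) * catalan (n - i) := by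
    rw [WSp_eq hn, ncard_biUnion _ _ (fun i _ => Gp_finite n i) (Gp_disj hn)]
    refine Finset.sum_congr rfl ?_
    intro i hi
    simp only [Finset.mem_Icc] at hi
    exact ncard_Gp hi.1 hi.2
  rw [hcount]
  ring



open List Finset

lemma count_tf (l : List Bool) : l.count true + l.count false = l.length := by
  induction l with
  | nil => rfl
  | cons a l ih => cases a <;> simp [List.count_cons] <;> omega

lemma abEq_iff {x y : List Bool} (h : x.length = y.length) :
    AbEq x y ↔ x.count true = y.count true := by
  unfold AbEq
  constructor
  · exact fun hab => hab.1
  · intro hc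
    have h1 := count_tf x
    have h2 := count_tf y
    exact ⟨hc, by omega⟩

lemma abEq_length {x y : List Bool} (h : AbEq x y) : x.length = y.length := by
  have h1 := count_tf x
  have h2 := count_tf y
  have := h.1
  have := h.2
  omega

lemma abEq_symm {x y : List Bool} (h : AbEq x y) : AbEq y x := ⟨h.1.symm, h.2.symm⟩

def Phi (u v : List Bool) : List S := u.reverse.zip v

lemma wsum_zip : ∀ (x y : List Bool), x.length = y.length →
    wsum (x.zip y) = (x.count true : ℤ) - (y.count true : ℤ) := by
  intro x
  induction x with
  | nil =>
    intro y hy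
    have : y = [] := List.length_eq_zero_iff.mp (by simpa using hy.symm)
    subst this
    simp
  | cons a x ih =>
    intro y hy
    rcases y with _ | ⟨b, y⟩
    · simp at hy
    · simp only [List.zip_cons_cons, wsum_cons, List.count_cons]
      rw [ih y (by simpa using hy)]
      cases a <;> cases b <;> simp [val] <;> push_cast <;> ring

lemma take_zip' (x y : List Bool) (t : ℕ) :
    (x.zip y).take t = (x.take t).zip (y.take t) := by
  rw [List.zip_eq_zipWith, List.zip_eq_zipWith, List.take_zipWith]

lemma psum_Phi {u v : List Bool} (h : u.length = v.length) {t : ℕ} (ht : t ≤ u.length) :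
    psum (Phi u v) t
      = ((u.drop (u.length - t)).count true : ℤ) - ((v.take t).count true : ℤ) := by
  unfold Phi psum
  rw [take_zip', wsum_zip _ _ (by
    rw [List.length_take, List.length_take, List.length_reverse, h]),
    List.take_reverse, List.count_reverse]

lemma wsum_Phi {u v : List Bool} (h : u.length = v.length) :
    wsum (Phi u v) = (u.count true : ℤ) - (v.count true : ℤ) := by
  unfold Phi
  rw [wsum_zip _ _ (by rw [List.length_reverse, h]), List.count_reverse]

lemma count_take_add_drop (l : List Bool) (k : ℕ) :
    (l.take k).count true + (l.drop k).count true = l.count true := by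
  rw [← List.count_append, List.take_append_drop]

lemma Sone_eq {u v : List Bool} (h : u.length = v.length) :
    {t | 1 ≤ t ∧ t ≤ u.length - 1 ∧ AbEq (u.drop (u.length - t)) (v.take t)}
      = Sone u.length (Phi u v) := by
  ext t
  simp only [Set.mem_setOf_eq, Sone]
  constructor
  · rintro ⟨h1, h2, h3⟩
    refine ⟨h1, h2, ?_⟩
    have hlen1 : (u.drop (u.length - t)).length = t := by rw [List.length_drop]; omega
    have hlen2 : (v.take t).length = t := by rw [List.length_take]; omega
    rw [psum_Phi h (by omega)]
    have := (abEq_iff (hlen1.trans hlen2.symm)).mp h3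
    omega
  · rintro ⟨h1, h2, h3⟩
    refine ⟨h1, h2, ?_⟩
    have hlen1 : (u.drop (u.length - t)).length = t := by rw [List.length_drop]; omega
    have hlen2 : (v.take t).length = t := by rw [List.length_take]; omega
    rw [psum_Phi h (by omega)] at h3
    exact (abEq_iff (hlen1.trans hlen2.symm)).mpr (by omega)

lemma Stwo_eq {u v : List Bool} (h : u.length = v.length) :
    {t | 1 ≤ t ∧ t ≤ v.length - 1 ∧ AbEq (v.drop (v.length - t)) (u.take t)}
      = Stwo u.length (Phi u v) := by
  ext t
  simp only [Set.mem_setOf_eq, Stwo]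
  have key : ∀ t, 1 ≤ t → t ≤ u.length - 1 →
      (AbEq (v.drop (v.length - t)) (u.take t) ↔
        psum (Phi u v) (u.length - t) = wsum (Phi u v)) := by
    intro t h1 h2
    have hlen1 : (v.drop (v.length - t)).length = t := by rw [List.length_drop]; omega
    have hlen2 : (u.take t).length = t := by rw [List.length_take]; omega
    rw [psum_Phi h (by omega), wsum_Phi h]
    rw [show u.length - (u.length - t) = t from by omega]
    rw [h]
    have A := count_take_add_drop u t
    have B := count_take_add_drop v (v.length - t)
    rw [abEq_iff (hlen1.trans hlen2.symm)]
    constructor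
    · intro hc; omega
    · intro hc; omega
  constructor
  · rintro ⟨h1, h2, h3⟩
    exact ⟨h1, by omega, (key t h1 (by omega)).mp h3⟩
  · rintro ⟨h1, h2, h3⟩
    exact ⟨h1, by omega, (key t h1 (by omega)).mpr h3⟩

lemma hasIntB_iff {u v : List Bool} (h : u.length = v.length) :
    HasIntB u v ↔ (Sone u.length (Phi u v)).Nonempty := by
  rw [← Sone_eq h]
  constructor
  · rintro ⟨x, y, hxne, hxnequ, hxsuf, hypre, hynev, hab⟩
    set t := x.length with htdef
    have habl : x.length = y.length := abEq_length hab
    have ht1 : 1 ≤ t := List.length_pos_iff.mpr hxne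
    have htn : t ≤ u.length := hxsuf.length_le
    have hx : x = u.drop (u.length - t) := List.suffix_iff_eq_drop.mp hxsuf
    have htne : t ≠ u.length := by
      intro heq
      apply hxnequ
      rw [hx, heq, Nat.sub_self, List.drop_zero]
    have hy : y = v.take t := by
      have := List.prefix_iff_eq_take.mp hypre
      rw [this, ← habl]
    exact ⟨t, ht1, by omega, by rw [← hx, ← hy]; exact hab⟩
  · rintro ⟨t, ht1, ht2, hab⟩
    refine ⟨u.drop (u.length - t), v.take t, ?_, ?_, List.drop_suffix _ _,
      List.take_prefix _ _, ?_, hab⟩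
    · intro hnil
      have := congrArg List.length hnil
      rw [List.length_drop] at this
      simp only [List.length_nil] at this
      omega
    · intro heq
      have := congrArg List.length heq
      rw [List.length_drop] at this
      omega
    · intro heq
      have := congrArg List.length heq
      rw [List.length_take] at this
      omega

lemma hasExtB_iff {u v : List Bool} (h : u.length = v.length) :
    HasExtB u v ↔ (Stwo u.length (Phi u v)).Nonempty := by
  rw [← Stwo_eq h]
  constructor
  · rintro ⟨x, y, hxne, hxnequ, hxpre, hysuf, hynev, hab⟩
    set t := x.length with htdef
    have habl : x.length = y.length := abEq_length hab
    have ht1 : 1 ≤ t := List.length_pos_iff.mpr hxne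
    have htn : t ≤ u.length := hxpre.length_le
    have hx : x = u.take t := List.prefix_iff_eq_take.mp hxpre
    have htne : t ≠ u.length := by
      intro heq
      apply hxnequ
      rw [hx, heq, List.take_length]
    have hy : y = v.drop (v.length - t) := by
      have := List.suffix_iff_eq_drop.mp hysuf
      rw [this, ← habl]
    exact ⟨t, ht1, by omega, by rw [← hx, ← hy]; exact abEq_symm hab⟩
  · rintro ⟨t, ht1, ht2, hab⟩
    refine ⟨u.take t, v.drop (v.length - t), ?_, ?_, List.take_prefix _ _,
      List.drop_suffix _ _, ?_, abEq_symm hab⟩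
    · intro hnil
      have := congrArg List.length hnil
      rw [List.length_take] at this
      simp only [List.length_nil] at this
      omega
    · intro heq
      have := congrArg List.length heq
      rw [List.length_take] at this
      omega
    · intro heq
      have := congrArg List.length heq
      rw [List.length_drop] at this
      omega

lemma lsb_eq {u v : List Bool} (h : u.length = v.length) :
    lsb u v = sInf (Sone u.length (Phi u v)) := by
  unfold lsb
  rw [Sone_eq h]

lemma lsb_eq' {u v : List Bool} (h : u.length = v.length) :
    lsb v u = sInf (Stwo u.length (Phi u v)) := by
  unfold lsb
  rw [Stwo_eq h]

lemma TS_eq (n : ℕ) (hn : 2 ≤ n) :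
    {p : List Bool × List Bool | p.1.length = n ∧ p.2.length = n ∧ MAB p.1 p.2 ∧
        lsb p.1 p.2 + lsb p.2 p.1 = n + 1}.ncard = (WS n).ncard := by
  set TS := {p : List Bool × List Bool | p.1.length = n ∧ p.2.length = n ∧ MAB p.1 p.2 ∧
        lsb p.1 p.2 + lsb p.2 p.1 = n + 1} with hTS
  have hinj : Set.InjOn (fun p : List Bool × List Bool => Phi p.1 p.2) TS := by
    rintro ⟨u, v⟩ hp ⟨u', v'⟩ hq heq
    obtain ⟨h1, h2, -, -⟩ : u.length = n ∧ v.length = n ∧ _ ∧ _ := hp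
    obtain ⟨h1', h2', -, -⟩ : u'.length = n ∧ v'.length = n ∧ _ ∧ _ := hq
    have heq' : u.reverse.zip v = u'.reverse.zip v' := heq
    have hu : u.reverse = u'.reverse := by
      have e1 := List.map_fst_zip (by simp [h1, h2] : u.reverse.length ≤ v.length)
      have e2 := List.map_fst_zip (by simp [h1', h2'] : u'.reverse.length ≤ v'.length)
      rw [← e1, ← e2, heq']
    have hv : v = v' := by
      have e1 := List.map_snd_zip (by simp [h1, h2] : v.length ≤ u.reverse.length)
      have e2 := List.map_snd_zip (by simp [h1', h2'] : v'.length ≤ u'.reverse.length)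
      rw [← e1, ← e2, heq']
    have : u = u' := by
      have := congrArg List.reverse hu
      simpa using this
    simp [this, hv]
  have himg : (fun p : List Bool × List Bool => Phi p.1 p.2) '' TS = WS n := by
    ext w
    constructor
    · rintro ⟨⟨u, v⟩, ⟨h1, h2, ⟨hInt, hExt⟩, hlsb⟩, rfl⟩
      have h : u.length = v.length := h1.trans h2.symm
      refine ⟨by simp [Phi, h1, h2], ?_, ?_, ?_⟩
      · rw [← h1]; exact (hasIntB_iff h).mp hInt
      · rw [← h1]; exact (hasExtB_iff h).mp hExt
      · have hlsb2 : lsb u v + lsb v u = n + 1 := hlsb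
        rw [← h1, ← lsb_eq h, ← lsb_eq' h, h1]
        exact hlsb2
    · rintro ⟨hlen, hc1, hc2, hc3⟩
      set u := (w.map Prod.fst).reverse with hudef
      set v := w.map Prod.snd with hvdef
      have h1 : u.length = n := by simp [hudef, hlen]
      have h2 : v.length = n := by simp [hvdef, hlen]
      have h : u.length = v.length := h1.trans h2.symm
      have hPhi : Phi u v = w := by
        unfold Phi
        rw [hudef, List.reverse_reverse, hvdef, ← List.unzip_fst, ← List.unzip_snd,
          List.zip_unzip]
      refine ⟨(u, v), ⟨h1, h2, ⟨?_, ?_⟩, ?_⟩, hPhi⟩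
      · rw [hasIntB_iff h, hPhi, h1]; exact hc1
      · rw [hasExtB_iff h, hPhi, h1]; exact hc2
      · rw [lsb_eq h, lsb_eq' h, hPhi, h1]; exact hc3
  rw [← himg, Set.ncard_image_of_injOn hinj]



open Finset

lemma choose_sum_catalan (a : ℕ) :
    ∑ j ∈ Finset.Icc 1 a, a.choose j * a.choose (j - 1) = a * catalan a := by
  rcases Nat.eq_zero_or_pos a with rfl | ha
  · simp
  · have hv := Nat.add_choose_eq a a (a - 1)
    rw [Finset.Nat.sum_antidiagonal_eq_sum_range_succ_mk] at hv
    have h1 : ∀ p ∈ Finset.range a, a.choose p * a.choose (a - 1 - p)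
        = a.choose (p + 1) * a.choose p := by
      intro p hp
      simp only [Finset.mem_range] at hp
      have he : a - 1 - p = a - (p + 1) := by omega
      rw [he, Nat.choose_symm (by omega)]
      ring
    rw [show (a - 1).succ = a from by omega, Finset.sum_congr rfl h1] at hv
    have h2 : ∑ j ∈ Finset.Icc 1 a, a.choose j * a.choose (j - 1)
        = ∑ p ∈ Finset.range a, a.choose (p + 1) * a.choose p := by
      refine Finset.sum_nbij' (fun j => j - 1) (fun p => p + 1) ?_ ?_ ?_ ?_ ?_
      · intro x hx; simp only [Finset.mem_Icc] at hx; simp only [Finset.mem_range]; omega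
      · intro x hx; simp only [Finset.mem_range] at hx; simp only [Finset.mem_Icc]; omega
      · intro x hx; simp only [Finset.mem_Icc] at hx; omega
      · intro x hx; simp only [Finset.mem_range] at hx; omega
      · intro x hx; simp only [Finset.mem_Icc] at hx
        rw [show x - 1 + 1 = x from by omega]
    rw [h2, ← hv]
    have h3 : (a + a).choose a * a = (a + a).choose (a - 1) * (a + 1) := by
      have hcs := Nat.choose_succ_right_eq (a + a) (a - 1)
      rw [show a - 1 + 1 = a from by omega] at hcs
      rw [hcs]
      congr 1
      omega
    have h4 : (a + a).choose a = (a + 1) * catalan a := by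
      have hc := succ_mul_catalan_eq_centralBinom a
      have : Nat.centralBinom a = (a + a).choose a := by
        unfold Nat.centralBinom
        congr 1
        omega
      rw [this] at hc
      omega
    have h5 : (a + a).choose (a - 1) * (a + 1) = (a * catalan a) * (a + 1) := by
      rw [← h3, h4]; ring
    exact Nat.eq_of_mul_eq_mul_right (by omega) h5

lemma rhs_reduce (n : ℕ) (hn : 2 ≤ n) :
    (∑ i ∈ Finset.Icc 2 (n - 1), ∑ l ∈ Finset.Icc 1 (n - i),
          ∑ m ∈ Finset.Icc (l + 1) (i + l - 1),
            (1 / (((i - 1) * (n - i) : ℕ) : ℚ)) *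
              ((n - i).choose l : ℚ) * ((n - i).choose (l - 1) : ℚ) *
              ((i - 1).choose (m - l) : ℚ) * ((i - 1).choose (m - l - 1) : ℚ))
      = ∑ i ∈ Finset.Icc 2 (n - 1), ((catalan (i - 1) * catalan (n - i) : ℕ) : ℚ) := by
  refine Finset.sum_congr rfl ?_
  intro i hi
  simp only [Finset.mem_Icc] at hi
  have hi1 : (1:ℕ) ≤ i - 1 := by omega
  have hk1 : (1:ℕ) ≤ n - i := by omega
  have inner_nat : ∀ l : ℕ, (∑ m ∈ Finset.Icc (l + 1) (i + l - 1),
      (i - 1).choose (m - l) * (i - 1).choose (m - l - 1)) = (i - 1) * catalan (i - 1) := by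
    intro l
    rw [← choose_sum_catalan (i - 1)]
    refine Finset.sum_nbij' (fun m => m - l) (fun j => j + l) ?_ ?_ ?_ ?_ ?_
    · intro x hx; simp only [Finset.mem_Icc] at hx ⊢; omega
    · intro x hx; simp only [Finset.mem_Icc] at hx ⊢; omega
    · intro x hx; simp only [Finset.mem_Icc] at hx; omega
    · intro x hx; simp only [Finset.mem_Icc] at hx; omega
    · intro x hx; rfl
  have hl : ∀ l ∈ Finset.Icc 1 (n - i), (∑ m ∈ Finset.Icc (l + 1) (i + l - 1),
      (1 / (((i - 1) * (n - i) : ℕ) : ℚ)) *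
        ((n - i).choose l : ℚ) * ((n - i).choose (l - 1) : ℚ) *
        ((i - 1).choose (m - l) : ℚ) * ((i - 1).choose (m - l - 1) : ℚ))
      = (1 / (((i - 1) * (n - i) : ℕ) : ℚ)) * (((n - i).choose l * (n - i).choose (l - 1) : ℕ) : ℚ)
          * (((i - 1) * catalan (i - 1) : ℕ) : ℚ) := by
    intro l _
    have step1 : (∑ m ∈ Finset.Icc (l + 1) (i + l - 1),
        (1 / (((i - 1) * (n - i) : ℕ) : ℚ)) *
          ((n - i).choose l : ℚ) * ((n - i).choose (l - 1) : ℚ) *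
          ((i - 1).choose (m - l) : ℚ) * ((i - 1).choose (m - l - 1) : ℚ))
        = (1 / (((i - 1) * (n - i) : ℕ) : ℚ)) * (((n - i).choose l * (n - i).choose (l - 1) : ℕ) : ℚ)
            * (∑ m ∈ Finset.Icc (l + 1) (i + l - 1),
                ((i - 1).choose (m - l) : ℚ) * ((i - 1).choose (m - l - 1) : ℚ)) := by
      rw [Finset.mul_sum]
      refine Finset.sum_congr rfl ?_
      intro m _
      push_cast
      ring
    rw [step1]
    congr 1
    rw [← inner_nat l]
    push_cast
    rfl
  rw [Finset.sum_congr rfl hl]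
  have step2 : (∑ l ∈ Finset.Icc 1 (n - i),
      (1 / (((i - 1) * (n - i) : ℕ) : ℚ)) * (((n - i).choose l * (n - i).choose (l - 1) : ℕ) : ℚ)
        * (((i - 1) * catalan (i - 1) : ℕ) : ℚ))
      = (1 / (((i - 1) * (n - i) : ℕ) : ℚ)) * (((i - 1) * catalan (i - 1) : ℕ) : ℚ)
          * (((n - i) * catalan (n - i) : ℕ) : ℚ) := by
    rw [← choose_sum_catalan (n - i)]
    push_cast
    rw [Finset.mul_sum]
    refine Finset.sum_congr rfl ?_
    intro l _
    ring
  rw [step2]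
  have hd : (((i - 1) * (n - i) : ℕ) : ℚ) ≠ 0 := by
    push_cast
    intro hc
    rcases mul_eq_zero.mp hc with hc | hc <;> simp at hc <;> omega
  field_simp
  push_cast
  ring


end SBP

open SBP in
theorem stmt_7 (n : ℕ) (hn : 2 ≤ n) :
    ({p : List Bool × List Bool | p.1.length = n ∧ p.2.length = n ∧ MAB p.1 p.2 ∧
        lsb p.1 p.2 + lsb p.2 p.1 = n + 1}.ncard : ℚ)
      = 2 * ∑ i ∈ Finset.Icc 2 (n - 1), ∑ l ∈ Finset.Icc 1 (n - i),
          ∑ m ∈ Finset.Icc (l + 1) (i + l - 1),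
            (1 / (((i - 1) * (n - i) : ℕ) : ℚ)) *
              ((n - i).choose l : ℚ) * ((n - i).choose (l - 1) : ℚ) *
              ((i - 1).choose (m - l) : ℚ) * ((i - 1).choose (m - l - 1) : ℚ) := by
  rw [TS_eq n hn, ncard_WS hn, rhs_reduce n hn]
  push_cast
  ring
end
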